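/- arXiv:2602.03058 — 9 statements merged into one kernel-verified Lean document; each statement's English description precedes it below -/
import Mathlib

section
/- For every nonnegative integer ℓ, every integer n ≥ 1, and all real numbers x_1, ..., x_n, the complete homogeneous symmetric polynomial admits the probabilistic representation h_ℓ(x_1, ..., x_n) = (1/ℓ!) · E[(Σ_{j=1}^n x_j·𝓔_j)^ℓ], where 𝓔_1, ..., 𝓔_n are i.i.d. standard exponential random variables. -/
/-!
Expand `(∑ⱼ xⱼ 𝓔ⱼ)^ℓ` as a sum over all words `f : Fin ℓ → Fin n`. By independence and
`E[𝓔^k] = k!`, the word `f` contributes `∏ᵢ x_{f i}` times `∏ⱼ cⱼ!`, where `cⱼ` is the number of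
letters of `f` equal to `j`. This product is the order of the stabiliser of `f` under permutations
of its positions, hence also the number of permutations `σ` for which `f ∘ σ` is monotone.
Summing over `f` and `σ`, every monotone word is counted once for each of the `ℓ!` permutations.
-/

open MeasureTheory ProbabilityTheory

open scoped Classical in
/-- The complete homogeneous symmetric polynomial of degree `ℓ` in `n` real variables:
the sum of all distinct degree-`ℓ` monomials, indexed by monotone tuples
`j₁ ≤ j₂ ≤ ⋯ ≤ j_ℓ`. -/
noncomputable def chs (n ℓ : ℕ) (x : Fin n → ℝ) : ℝ :=
  ∑ f ∈ Finset.univ.filter (fun f : Fin ℓ → Fin n => Monotone f), ∏ i, x (f i)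

open Finset Set Equiv
open scoped Nat

lemma expMeasure_one_eq_withDensity : expMeasure 1 =
    (volume.restrict (Ioi (0 : ℝ))).withDensity fun x ↦ ENNReal.ofReal (Real.exp (-x)) := by
  rw [expMeasure, gammaMeasure, restrict_Ioi_eq_restrict_Ici,
    ← withDensity_indicator measurableSet_Ici]
  congr 1
  ext x
  by_cases hx : 0 ≤ x <;> simp [gammaPDF, gammaPDFReal, hx]

lemma integrable_pow_expMeasure_one (k : ℕ) :
    Integrable (fun x : ℝ ↦ x ^ k) (expMeasure 1) := by
  rw [expMeasure_one_eq_withDensity, integrable_withDensity_iff_integrable_smul'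
    (by fun_prop) (ae_of_all _ fun _ ↦ ENNReal.ofReal_lt_top)]
  have h := Real.GammaIntegral_convergent (s := k + 1) (by positivity)
  simp only [add_sub_cancel_right, Real.rpow_natCast] at h
  simpa [Real.exp_nonneg] using h.integrable

lemma integral_pow_expMeasure_one (k : ℕ) : ∫ x, x ^ k ∂expMeasure 1 = k ! := by
  rw [expMeasure_one_eq_withDensity, integral_withDensity_eq_integral_toReal_smul
    (by fun_prop) (ae_of_all _ fun _ ↦ ENNReal.ofReal_lt_top)]
  simpa [Real.exp_nonneg, Real.Gamma_nat_eq_factorial] using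
    (Real.Gamma_eq_integral (s := k + 1) (by positivity)).symm

section Independence

variable {Ω ι : Type*} [MeasurableSpace Ω] {μ : Measure Ω}

lemma ProbabilityTheory.iIndepFun.integrable_fun_finsetProd {X : ι → Ω → ℝ}
    (hX : iIndepFun X μ) (hmeas : ∀ i, AEMeasurable (X i) μ) {s : Finset ι}
    (hint : ∀ i ∈ s, Integrable (X i) μ) : Integrable (fun ω ↦ ∏ i ∈ s, X i ω) μ := by
  classical
  have := hX.isProbabilityMeasure
  induction s using Finset.induction with
  | empty => simp
  | insert i s hi ih =>
    have hind := hX.indepFun_finsetProd_of_notMem₀ hmeas hi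
    rw [prod_fn] at hind
    simp_rw [prod_insert hi, mul_comm (X i _)]
    exact hind.integrable_mul (ih fun j hj ↦ hint j (mem_insert_of_mem hj))
      (hint i (mem_insert_self i s))

variable [Fintype ι] {X : ι → Ω → ℝ}

lemma integrable_prod_pow_of_iIndepFun_expMeasure (hX : iIndepFun X μ)
    (hlaw : ∀ i, HasLaw (X i) (expMeasure 1) μ) (k : ι → ℕ) :
    Integrable (fun ω ↦ ∏ i, X i ω ^ k i) μ := by
  refine (hX.comp (fun i x ↦ x ^ k i) fun _ ↦ by fun_prop).integrable_fun_finsetProd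
    (fun i ↦ (hlaw i).aemeasurable.pow_const _) fun i _ ↦ ?_
  rw [← integrable_map_measure (by fun_prop) (hlaw i).aemeasurable, (hlaw i).map_eq]
  exact integrable_pow_expMeasure_one (k i)

lemma integral_prod_pow_of_iIndepFun_expMeasure (hX : iIndepFun X μ)
    (hlaw : ∀ i, HasLaw (X i) (expMeasure 1) μ) (k : ι → ℕ) :
    ∫ ω, ∏ i, X i ω ^ k i ∂μ = ∏ i, ((k i)! : ℝ) := by
  rw [hX.integral_fun_prod_comp (f := fun i x ↦ x ^ k i) (fun i ↦ (hlaw i).aemeasurable)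
    fun i ↦ by fun_prop]
  refine Fintype.prod_congr _ _ fun i ↦ ?_
  rw [← integral_pow_expMeasure_one, ← (hlaw i).integral_comp (by fun_prop)]
  rfl

end Independence

section Sorting

variable {α : Type*} [LinearOrder α] [Fintype α] {ℓ : ℕ}

open scoped Classical in
lemma card_perm_monotone_comp (f : Fin ℓ → α) :
    #{σ : Perm (Fin ℓ) | Monotone (f ∘ σ)} = ∏ a, (#{i | f i = a})! := by
  simp_rw [← Fintype.card_subtype, ← DomMulAct.stabilizer_card f]
  refine Fintype.card_congr (subtypeEquiv (Equiv.mulRight (Tuple.sort f)) fun σ ↦ ?_).symm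
  rw [coe_mulRight, ← Tuple.comp_sort_eq_comp_iff_monotone, Perm.coe_mul, ← Function.comp_assoc]
  exact (Tuple.sort f).surjective.injective_comp_right.eq_iff.symm

open scoped Classical in
lemma sum_card_perm_monotone_comp_nsmul {M : Type*} [AddCommMonoid M] (w : (Fin ℓ → α) → M)
    (hw : ∀ f (σ : Perm (Fin ℓ)), w (f ∘ σ) = w f) :
    ∑ f, #{σ : Perm (Fin ℓ) | Monotone (f ∘ σ)} • w f = ℓ ! • ∑ f with Monotone f, w f := by
  have hreindex (σ : Perm (Fin ℓ)) : ∑ f, (if Monotone (f ∘ σ) then w f else 0) =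
      ∑ f, if Monotone f then w f else 0 :=
    Fintype.sum_equiv (σ.symm.arrowCongr (Equiv.refl α)) _ _ fun f ↦ by
      change _ = if Monotone (f ∘ σ) then w (f ∘ σ) else 0
      rw [hw]
  simp_rw [← sum_const, sum_filter]
  rw [sum_comm, sum_congr rfl fun σ _ ↦ hreindex σ, sum_const, card_univ, Fintype.card_perm,
    Fintype.card_fin]

end Sorting

theorem chs_eq_moment_sum_exponentials_general
    {Ω : Type*} [MeasurableSpace Ω] (μ : Measure Ω)
    (ℓ : ℕ) (n : ℕ) (x : Fin n → ℝ)
    (E : Fin n → Ω → ℝ) (hmeas : ∀ j, Measurable (E j))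
    (hindep : iIndepFun E μ)
    (hlaw : ∀ j, Measure.map (E j) μ = expMeasure 1) :
    chs n ℓ x = (1 / (Nat.factorial ℓ : ℝ)) * ∫ ω, (∑ j, x j * E j ω) ^ ℓ ∂μ := by
  have hE (j : Fin n) : HasLaw (E j) (expMeasure 1) μ := ⟨(hmeas j).aemeasurable, hlaw j⟩
  have hfiber (f : Fin ℓ → Fin n) (ω : Ω) :
      ∏ i, x (f i) * E (f i) ω = (∏ i, x (f i)) * ∏ j, E j ω ^ #{i | f i = j} := by
    simp_rw [prod_mul_distrib, ← prod_const, prod_fiberwise']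
  have hint (f : Fin ℓ → Fin n) : Integrable (fun ω ↦ ∏ i, x (f i) * E (f i) ω) μ := by
    simp_rw [hfiber]
    exact (integrable_prod_pow_of_iIndepFun_expMeasure hindep hE _).const_mul _
  have hword (f : Fin ℓ → Fin n) : ∫ ω, ∏ i, x (f i) * E (f i) ω ∂μ =
      #{σ : Perm (Fin ℓ) | Monotone (f ∘ σ)} • ∏ i, x (f i) := by
    simp_rw [hfiber, integral_const_mul, integral_prod_pow_of_iIndepFun_expMeasure hindep hE,
      card_perm_monotone_comp, nsmul_eq_mul, Nat.cast_prod, mul_comm]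
  simp_rw [Fintype.sum_pow]
  rw [integral_finsetSum _ fun f _ ↦ hint f, sum_congr rfl fun f _ ↦ hword f,
    sum_card_perm_monotone_comp_nsmul _ fun f σ ↦ Equiv.prod_comp σ fun i ↦ x (f i), chs,
    nsmul_eq_mul]
  field_simp

/-- **Probabilistic representation of CHS polynomials**:
`h_ℓ(x) = (1/ℓ!) E[(∑ x_j 𝓔_j)^ℓ]` for i.i.d. standard exponentials `𝓔_j`. -/
theorem chs_eq_moment_sum_exponentials
    {Ω : Type*} [MeasurableSpace Ω] (μ : Measure Ω) [IsProbabilityMeasure μ]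
    (ℓ : ℕ) (n : ℕ) (hn : 1 ≤ n) (x : Fin n → ℝ)
    (E : Fin n → Ω → ℝ) (hmeas : ∀ j, Measurable (E j))
    (hindep : iIndepFun E μ)
    (hlaw : ∀ j, Measure.map (E j) μ = expMeasure 1) :
    chs n ℓ x = (1 / (Nat.factorial ℓ : ℝ)) * ∫ ω, (∑ j, x j * E j ω) ^ ℓ ∂μ :=
  chs_eq_moment_sum_exponentials_general μ ℓ n x E hmeas hindep hlaw
end

section
/- Let Φ: ℝ → ℝ be continuously differentiable with |Φ(t)| = O(|t|^β) and |Φ'(t)| = O(|t|^β) for some β > 0. Let 𝓔, 𝓔_1, ..., 𝓔_n be i.i.d. standard exponential random variables, let x_1, ..., x_n, u be real numbers and S_x = Σ_{j=1}^n x_j·𝓔_j. Then E[Φ(S_x)] = E[Φ(S_x + u·𝓔)] − u·E[Φ'(S_x + u·𝓔)]. -/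
/-!
Since `𝓔` is independent of `S_x`, Fubini reduces the identity to its one-dimensional case
`∫₀^∞ (Φ(s + ut) - uΦ'(s + ut)) e^{-t} dt = Φ(s)`, which is the fundamental theorem of calculus
for `t ↦ -Φ(s + ut) e^{-t}`; the boundary term at infinity vanishes because this function and its
derivative are integrable. Integrability of all integrands comes from the growth of `Φ` and `Φ'`
together with the finiteness of all moments of the exponential distribution.
-/

open MeasureTheory ProbabilityTheory Filter Asymptotics Real Set
open scoped ENNReal

theorem Continuous.isBigO_top_of_isBigO_cocompact {D 𝕜 : Type*} [TopologicalSpace D]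
    [NormedField 𝕜] {f g : D → 𝕜} (hf : Continuous f) (hg : Continuous g) (hg0 : ∀ x, g x ≠ 0)
    (h : f =O[cocompact D] g) : f =O[⊤] g := by
  have hquot : (fun x => f x / g x) =O[cocompact D] (1 : D → ℝ) := by
    refine ((h.mul (isBigO_refl (fun x => (g x)⁻¹) _)).congr (fun x => (div_eq_mul_inv _ _).symm)
      (fun x => mul_inv_cancel₀ (hg0 x))).trans_le fun x => by simp
  obtain ⟨C, hC⟩ := isBounded_iff_forall_norm_le.1
    ((hf.div hg hg0).isBounded_range_iff_isBigO.2 hquot)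
  refine isBigO_top.2 ⟨C, fun x => ?_⟩
  have hgx : 0 < ‖g x‖ := norm_pos_iff.2 (hg0 x)
  have := hC _ (mem_range_self x)
  rwa [Pi.div_apply, norm_div, div_le_iff₀ hgx] at this

lemma integrable_comp_of_isBigO_cocompact_rpow {Ω : Type*} [MeasurableSpace Ω] {μ : Measure Ω}
    [IsFiniteMeasure μ] {f : ℝ → ℝ} (hf : Continuous f) {β : ℝ} (hβ : 0 < β)
    (hO : f =O[cocompact ℝ] fun t => |t| ^ β) {Y : Ω → ℝ} (hY : MemLp Y (ENNReal.ofReal β) μ) :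
    Integrable (fun ω => f (Y ω)) μ := by
  have hg : Continuous fun t : ℝ => 1 + |t| ^ β :=
    continuous_const.add (continuous_abs.rpow_const fun _ => Or.inr hβ.le)
  have hle : (fun t : ℝ => |t| ^ β) =O[cocompact ℝ] fun t => 1 + |t| ^ β :=
    isBigO_of_le _ fun t => by
      rw [norm_of_nonneg (by positivity), norm_of_nonneg (by positivity)]
      linarith
  have htop := hf.isBigO_top_of_isBigO_cocompact hg (fun t => by positivity) (hO.trans hle)
  refine (htop.comp_tendsto tendsto_top).integrable (hf.comp_aestronglyMeasurable hY.1) ?_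
  have hmom := hY.integrable_norm_rpow (by simpa using hβ) ENNReal.ofReal_ne_top
  simpa [Function.comp_def, ENNReal.toReal_ofReal hβ.le] using hmom

namespace ProbabilityTheory

lemma expMeasure_one_eq_withDensity :
    expMeasure 1 = (volume.restrict (Ioi 0)).withDensity fun t => ENNReal.ofReal (exp (-t)) := by
  have hpdf : exponentialPDF 1 = (Ici 0).indicator fun t => ENNReal.ofReal (exp (-t)) := by
    ext t
    by_cases ht : 0 ≤ t <;> simp [exponentialPDF_eq, ht]
  rw [show expMeasure 1 = volume.withDensity (exponentialPDF 1) from rfl, hpdf,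
    withDensity_indicator measurableSet_Ici,
    Measure.restrict_congr_set Ioi_ae_eq_Ici]

section

variable {E : Type*} [NormedAddCommGroup E] [NormedSpace ℝ E]

lemma integral_expMeasure_one (f : ℝ → E) :
    ∫ t, f t ∂expMeasure 1 = ∫ t in Ioi 0, exp (-t) • f t := by
  rw [expMeasure_one_eq_withDensity]
  exact (integral_withDensity_eq_integral_smul (by fun_prop) f).trans
    (setIntegral_congr_fun measurableSet_Ioi fun t _ => by
      simp [NNReal.smul_def, (exp_pos _).le])

lemma integrable_expMeasure_one_iff {f : ℝ → E} :
    Integrable f (expMeasure 1) ↔ IntegrableOn (fun t => exp (-t) • f t) (Ioi 0) := by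
  rw [expMeasure_one_eq_withDensity]
  refine (integrable_withDensity_iff_integrable_smul (by fun_prop)).trans ?_
  simp [NNReal.smul_def, (exp_pos _).le, IntegrableOn]

end

lemma memLp_id_expMeasure_one {p : ℝ≥0∞} (hp : p ≠ ∞) : MemLp id p (expMeasure 1) := by
  rcases eq_or_ne p 0 with rfl | hp0
  · exact memLp_zero_iff_aestronglyMeasurable.2 aestronglyMeasurable_id
  rw [← integrable_norm_rpow_iff aestronglyMeasurable_id hp0 hp, integrable_expMeasure_one_iff]
  refine (GammaIntegral_convergent (s := p.toReal + 1) (by positivity)).congr_fun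
    (fun t ht => ?_) measurableSet_Ioi
  simp [abs_of_pos (mem_Ioi.1 ht)]

lemma integral_sub_deriv_expMeasure_one {g g' : ℝ → ℝ} (hcont : ContinuousWithinAt g (Ici 0) 0)
    (hderiv : ∀ t ∈ Ioi 0, HasDerivAt g (g' t) t)
    (hg : Integrable g (expMeasure 1)) (hg' : Integrable g' (expMeasure 1)) :
    ∫ t, g t - g' t ∂expMeasure 1 = g 0 := by
  simp only [integrable_expMeasure_one_iff, smul_eq_mul] at hg hg'
  have hF : ∀ t ∈ Ioi 0,
      HasDerivAt (fun t => -(exp (-t) * g t)) (exp (-t) * (g t - g' t)) t := fun t ht =>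
    ((hasDerivAt_neg t).exp.fun_mul (hderiv t ht)).fun_neg.congr_deriv (by ring)
  have hint : IntegrableOn (fun t => exp (-t) * (g t - g' t)) (Ioi 0) := by
    simpa only [mul_sub, Pi.sub_def] using hg.sub hg'
  have hlim := tendsto_zero_of_hasDerivAt_of_integrableOn_Ioi hF hint hg.neg
  have hFcont : ContinuousWithinAt (fun t => -(exp (-t) * g t)) (Ici 0) 0 :=
    ((continuous_neg.rexp).continuousWithinAt.mul hcont).neg
  simp only [integral_expMeasure_one, smul_eq_mul,
    integral_Ioi_of_hasDerivAt_of_tendsto hFcont hF hint hlim]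
  simp

lemma integral_sub_mul_deriv_comp_expMeasure_one {Φ : ℝ → ℝ} (hΦ : ContDiff ℝ 1 Φ) {β : ℝ}
    (hβ : 0 < β) (hgrow : Φ =O[cocompact ℝ] fun t => |t| ^ β)
    (hgrow' : deriv Φ =O[cocompact ℝ] fun t => |t| ^ β) (s u : ℝ) :
    ∫ t, Φ (s + u * t) - u * deriv Φ (s + u * t) ∂expMeasure 1 = Φ s := by
  have : IsProbabilityMeasure (expMeasure 1) := isProbabilityMeasure_expMeasure one_pos
  have hY : MemLp (fun t => s + u * t) (ENNReal.ofReal β) (expMeasure 1) :=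
    (memLp_const s).add ((memLp_id_expMeasure_one ENNReal.ofReal_ne_top).const_mul u)
  have hderiv : ∀ t, HasDerivAt (fun t => Φ (s + u * t)) (u * deriv Φ (s + u * t)) t := fun t =>
    ((hΦ.differentiable one_ne_zero _).hasDerivAt.comp t
      (((hasDerivAt_id t).const_mul u).const_add s)).congr_deriv (by simp only [id]; ring)
  simpa using integral_sub_deriv_expMeasure_one
    (hΦ.continuous.comp (by fun_prop)).continuousWithinAt (fun t _ => hderiv t)
    (integrable_comp_of_isBigO_cocompact_rpow hΦ.continuous hβ hgrow hY)
    ((integrable_comp_of_isBigO_cocompact_rpow (hΦ.continuous_deriv le_rfl) hβ hgrow'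
      hY).const_mul u)

theorem IndepFun.integral_comp_eq_integral_integral {Ω α β E : Type*} [MeasurableSpace Ω]
    [MeasurableSpace α] [MeasurableSpace β] [NormedAddCommGroup E] [NormedSpace ℝ E]
    {μ : Measure Ω} [IsFiniteMeasure μ] {X : Ω → α} {Y : Ω → β} (hXY : IndepFun X Y μ)
    (hX : AEMeasurable X μ) (hY : AEMeasurable Y μ) {f : α × β → E}
    (hf : AEStronglyMeasurable f ((μ.map X).prod (μ.map Y)))
    (hfXY : Integrable (fun ω => f (X ω, Y ω)) μ) :
    ∫ ω, f (X ω, Y ω) ∂μ = ∫ a, ∫ b, f (a, b) ∂(μ.map Y) ∂(μ.map X) := by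
  have hmap := hXY.map_prod_eq_prod_map_map hX hY
  have hXYm : AEMeasurable (fun ω => (X ω, Y ω)) μ := hX.prodMk hY
  rw [← hmap] at hf
  rw [← integral_map hXYm hf, ← integral_prod _ (hmap ▸ (integrable_map_measure hf hXYm).2 hfXY),
    hmap]

lemma iIndepFun.indepFun_sum_castSucc_mul_last {Ω : Type*} [MeasurableSpace Ω] {μ : Measure Ω}
    {n : ℕ} {E : Fin (n + 1) → Ω → ℝ} (hE : iIndepFun E μ) (hmeas : ∀ j, Measurable (E j))
    (x : Fin n → ℝ) :
    IndepFun (fun ω => ∑ j : Fin n, x j * E j.castSucc ω) (E (Fin.last n)) μ := by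
  -- With weight `1` at the last index, both sides are taken from one rescaled independent family.
  set c : Fin (n + 1) → ℝ := Fin.snoc x 1
  have hcE : iIndepFun (fun i ω => c i * E i ω) μ :=
    hE.comp (fun i t => c i * t) fun i => measurable_const_mul (c i)
  have hlast : Fin.last n ∉ Finset.univ.map Fin.castSuccEmb := by simp
  convert hcE.indepFun_finsetSum_of_notMem (fun i => (hmeas i).const_mul (c i)) hlast using 1
  · ext ω
    simp [c]
  · ext ω
    simp [c]

end ProbabilityTheory

/-- **Integration-by-parts formula for the exponential distribution** (Lemma 2.1):
for `Φ` a `C¹` function of moderate growth, i.i.d. standard exponentials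
`𝓔₁, …, 𝓔ₙ, 𝓔` and `S_x = ∑ x_j 𝓔_j`, one has
`E Φ(S_x) = E Φ(S_x + u𝓔) - u E Φ'(S_x + u𝓔)`. -/
theorem exp_integration_by_parts
    {Ω : Type*} [MeasurableSpace Ω] (μ : Measure Ω) [IsProbabilityMeasure μ]
    (Φ : ℝ → ℝ) (hΦ : ContDiff ℝ 1 Φ) (β : ℝ) (hβ : 0 < β)
    (hgrow : Φ =O[cocompact ℝ] fun t => |t| ^ β)
    (hgrow' : (deriv Φ) =O[cocompact ℝ] fun t => |t| ^ β)
    (n : ℕ) (x : Fin n → ℝ) (u : ℝ)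
    (E : Fin (n + 1) → Ω → ℝ) (hmeas : ∀ j, Measurable (E j))
    (hindep : iIndepFun E μ)
    (hlaw : ∀ j, Measure.map (E j) μ = expMeasure 1) :
    (∫ ω, Φ (∑ j : Fin n, x j * E j.castSucc ω) ∂μ)
      = (∫ ω, Φ ((∑ j : Fin n, x j * E j.castSucc ω) + u * E (Fin.last n) ω) ∂μ)
        - u * ∫ ω, deriv Φ ((∑ j : Fin n, x j * E j.castSucc ω) + u * E (Fin.last n) ω) ∂μ := by
  set S : Ω → ℝ := fun ω => ∑ j : Fin n, x j * E j.castSucc ω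
  have hS : Measurable S := Finset.measurable_sum _ fun j _ => (hmeas _).const_mul _
  have hE : ∀ j, MemLp (E j) (ENNReal.ofReal β) μ := fun j =>
    (memLp_map_measure_iff aestronglyMeasurable_id (hmeas j).aemeasurable).1
      (hlaw j ▸ memLp_id_expMeasure_one ENNReal.ofReal_ne_top)
  have hY : MemLp (fun ω => S ω + u * E (Fin.last n) ω) (ENNReal.ofReal β) μ :=
    (memLp_finsetSum _ fun j _ => (hE _).const_mul _).add ((hE _).const_mul u)
  have hint := integrable_comp_of_isBigO_cocompact_rpow hΦ.continuous hβ hgrow hY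
  have hint' := integrable_comp_of_isBigO_cocompact_rpow (hΦ.continuous_deriv le_rfl) hβ hgrow' hY
  calc ∫ ω, Φ (S ω) ∂μ = ∫ s, Φ s ∂μ.map S :=
        (integral_map hS.aemeasurable hΦ.continuous.aestronglyMeasurable).symm
    _ = ∫ s, ∫ t, Φ (s + u * t) - u * deriv Φ (s + u * t) ∂μ.map (E (Fin.last n)) ∂μ.map S := by
        simp only [hlaw, integral_sub_mul_deriv_comp_expMeasure_one hΦ hβ hgrow hgrow']
    _ = ∫ ω, Φ (S ω + u * E (Fin.last n) ω) - u * deriv Φ (S ω + u * E (Fin.last n) ω) ∂μ :=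
        ((hindep.indepFun_sum_castSucc_mul_last hmeas x).integral_comp_eq_integral_integral
          (f := fun p => Φ (p.1 + u * p.2) - u * deriv Φ (p.1 + u * p.2))
          hS.aemeasurable (hmeas _).aemeasurable (by fun_prop) (hint.sub (hint'.const_mul u))).symm
    _ = _ := by rw [integral_sub hint (hint'.const_mul u), integral_const_mul]
end

section
/- Let Φ: ℝ → ℝ be continuously differentiable with |Φ(t)| = O(|t|^β) and |Φ'(t)| = O(|t|^β) for some β > 0. Let 𝓔, 𝓔', 𝓔_1, ..., 𝓔_n be i.i.d. standard exponential random variables, let x_1, ..., x_n be real numbers, and S_x = Σ_{j=1}^n x_j·𝓔_j. Then the function u ↦ E[Φ(S_x + u·𝓔)] is differentiable on ℝ with derivative (∂/∂u) E[Φ(S_x + u·𝓔)] = E[Φ'(S_x + u·𝓔 + u·𝓔')]. -/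
open scoped NNReal ENNReal
open MeasureTheory ProbabilityTheory Filter Asymptotics Set Real

lemma rpow_add_le_aux {β : ℝ} (hβ : 0 ≤ β) {x y : ℝ} (hx : 0 ≤ x) (hy : 0 ≤ y) :
    (x + y) ^ β ≤ 2 ^ β * (x ^ β + y ^ β) := by
  have h1 : x + y ≤ 2 * max x y := by
    rcases le_total x y with h | h
    · simp [max_eq_right h]; linarith
    · simp [max_eq_left h]; linarith
  have h2 : (x + y) ^ β ≤ (2 * max x y) ^ β :=
    Real.rpow_le_rpow (by linarith) h1 hβ
  have h3 : (2 * max x y) ^ β = 2 ^ β * (max x y) ^ β :=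
    Real.mul_rpow (by norm_num) (le_max_of_le_left hx)
  have h4 : (max x y) ^ β ≤ x ^ β + y ^ β := by
    rcases le_total x y with h | h
    · rw [max_eq_right h]
      have := Real.rpow_nonneg hx β
      linarith
    · rw [max_eq_left h]
      have := Real.rpow_nonneg hy β
      linarith
  calc (x + y) ^ β ≤ 2 ^ β * (max x y) ^ β := by rw [← h3]; exact h2
    _ ≤ 2 ^ β * (x ^ β + y ^ β) := by
        have : (0:ℝ) < 2 ^ β := Real.rpow_pos_of_pos (by norm_num) β
        nlinarith

lemma growth_bound {Φ : ℝ → ℝ} (hc : Continuous Φ) {β : ℝ} (hβ : 0 < β)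
    (h : Φ =O[cocompact ℝ] fun t => |t| ^ β) :
    ∃ C, 0 < C ∧ ∀ t, |Φ t| ≤ C * (1 + |t| ^ β) := by
  obtain ⟨C₀, hC₀, hbd⟩ := h.exists_pos
  rw [IsBigOWith, eventually_iff_exists_mem] at hbd
  obtain ⟨s, hs, hb⟩ := hbd
  rw [mem_cocompact] at hs
  obtain ⟨K, hK, hKs⟩ := hs
  obtain ⟨C₁, hC₁⟩ := (hK.image hc.norm).bddAbove
  have hC₁' : ∀ t ∈ K, |Φ t| ≤ C₁ := by
    intro t ht
    exact hC₁ ⟨t, ht, rfl⟩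
  refine ⟨C₀ + |C₁| + 1, by positivity, fun t => ?_⟩
  have hnn : (0:ℝ) ≤ |t| ^ β := Real.rpow_nonneg (abs_nonneg t) β
  by_cases ht : t ∈ K
  · have h1 := hC₁' t ht
    have h2 : C₁ ≤ |C₁| := le_abs_self C₁
    nlinarith [mul_nonneg (by positivity : (0:ℝ) ≤ C₀ + |C₁| + 1) hnn, abs_nonneg C₁]
  · have := hb t (hKs ht)
    simp only [norm_eq_abs, abs_abs] at this
    have h2 : |(|t| ^ β)| = |t| ^ β := abs_of_nonneg hnn
    rw [h2] at this
    nlinarith [mul_nonneg (abs_nonneg C₁) hnn, hnn, abs_nonneg C₁]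

noncomputable def expd : ℝ → ℝ≥0 := fun y => Real.toNNReal (exponentialPDFReal 1 y)

lemma expd_meas : Measurable expd := (measurable_exponentialPDFReal 1).real_toNNReal

lemma expMeasure_eq : expMeasure 1 = volume.withDensity (fun y => (expd y : ℝ≥0∞)) := rfl

lemma expd_coe (y : ℝ) : (expd y : ℝ) = if 0 ≤ y then Real.exp (-y) else 0 := by
  rw [expd, Real.coe_toNNReal']
  rw [exponentialPDFReal, gammaPDFReal]
  split_ifs with h
  · rw [max_eq_left]
    · simp [Real.Gamma_one]
    · positivity
  · simp

lemma integral_exp_meas (f : ℝ → ℝ) :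
    ∫ y, f y ∂(expMeasure 1) = ∫ y in Ioi 0, Real.exp (-y) * f y := by
  rw [expMeasure_eq, integral_withDensity_eq_integral_smul expd_meas]
  have : (fun y => expd y • f y) = Set.indicator (Ici 0) (fun y => Real.exp (-y) * f y) := by
    funext y
    rw [NNReal.smul_def, smul_eq_mul, expd_coe]
    by_cases h : 0 ≤ y <;> simp [Set.indicator, h]
  rw [this, integral_indicator measurableSet_Ici, integral_Ici_eq_integral_Ioi]

lemma integrable_exp_meas_iff (f : ℝ → ℝ) :
    Integrable f (expMeasure 1) ↔
      IntegrableOn (fun y => Real.exp (-y) * f y) (Ioi 0) volume := by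
  rw [expMeasure_eq, integrable_withDensity_iff_integrable_smul expd_meas]
  have : (fun y => expd y • f y) = Set.indicator (Ici 0) (fun y => Real.exp (-y) * f y) := by
    funext y
    rw [NNReal.smul_def, smul_eq_mul, expd_coe]
    by_cases h : 0 ≤ y <;> simp [Set.indicator, h]
  rw [this, integrable_indicator_iff measurableSet_Ici]
  exact integrableOn_Ici_iff_integrableOn_Ioi

lemma integrableOn_exp_rpow {p : ℝ} (hp : 0 ≤ p) :
    IntegrableOn (fun y => Real.exp (-y) * y ^ p) (Ioi 0) volume := by
  have := Real.GammaIntegral_convergent (s := p + 1) (by linarith)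
  simpa using this

lemma exp_mom {p : ℝ} (hp : 0 ≤ p) : Integrable (fun y => |y| ^ p) (expMeasure 1) := by
  rw [integrable_exp_meas_iff]
  apply (integrableOn_exp_rpow hp).congr_fun _ measurableSet_Ioi
  intro y hy
  simp only [mem_Ioi] at hy
  simp [abs_of_pos hy]

lemma exp_mom_mul {p : ℝ} (hp : 0 ≤ p) :
    Integrable (fun y => |y| ^ p * |y|) (expMeasure 1) := by
  have : (fun y : ℝ => |y| ^ p * |y|) = fun y => |y| ^ (p + 1) := by
    funext y
    rw [Real.rpow_add_one' (abs_nonneg y) (by linarith)]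
  rw [this]
  exact exp_mom (by linarith)

instance : IsProbabilityMeasure (expMeasure 1) := isProbabilityMeasure_expMeasure one_pos

lemma exp_ae_nonneg : ∀ᵐ y ∂(expMeasure 1), 0 ≤ y := by
  rw [ae_iff]
  have hset : {y : ℝ | ¬ 0 ≤ y} = Iio 0 := by ext y; simp
  rw [hset, expMeasure_eq, withDensity_apply _ measurableSet_Iio]
  have h0 : ∀ᵐ y ∂(volume.restrict (Iio 0)), (expd y : ℝ≥0∞) = 0 := by
    filter_upwards [ae_restrict_mem measurableSet_Iio] with y hy
    have h := expd_coe y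
    rw [if_neg (not_le.2 hy)] at h
    have h2 : expd y = 0 := by exact_mod_cast NNReal.coe_injective (by simpa using h)
    simp [h2]
  rw [lintegral_congr_ae h0, lintegral_zero]

lemma slice_integral (y c : ℝ) :
    ∫ a in Ioi (0:ℝ), Set.indicator (Iio y) (fun _ => c) a
      = Set.indicator (Ioi 0) (fun y' => y' * c) y := by
  rw [setIntegral_indicator measurableSet_Iio, Ioi_inter_Iio, setIntegral_const]
  rcases le_or_gt y 0 with hy | hy
  · rw [Ioo_eq_empty (by linarith)]
    simp [Set.indicator, hy.not_gt]
  · rw [measureReal_def, Real.volume_Ioo, ENNReal.toReal_ofReal (by linarith)]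
    simp [Set.indicator, hy, smul_eq_mul]

lemma bound_C_nonneg {h : ℝ → ℝ} {C β : ℝ} (hβ : 0 < β)
    (hb : ∀ t, |h t| ≤ C * (1 + |t| ^ β)) : 0 ≤ C := by
  have h1 := (abs_nonneg (h 0)).trans (hb 0)
  have h2 : |(0:ℝ)| ^ β = 0 := by rw [abs_zero, Real.zero_rpow hβ.ne']
  rw [h2] at h1; linarith

lemma core_conv {h : ℝ → ℝ} (hc : Continuous h) {C β : ℝ} (hβ : 0 < β)
    (hb : ∀ t, |h t| ≤ C * (1 + |t| ^ β)) :
    ∫ z : ℝ × ℝ, h (z.1 + z.2) ∂((expMeasure 1).prod (expMeasure 1))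
      = ∫ y, y * h y ∂(expMeasure 1) := by
  have hC : 0 ≤ C := bound_C_nonneg hβ hb
  have habs : ∀ a b : ℝ, |h (a + b)| ≤ C * (1 + 2 ^ β * (|a| ^ β * 1 + 1 * |b| ^ β)) := by
    intro a b
    refine (hb _).trans ?_
    have h1 : |a + b| ^ β ≤ (|a| + |b|) ^ β :=
      Real.rpow_le_rpow (abs_nonneg _) (abs_add_le a b) hβ.le
    have h2 := rpow_add_le_aux hβ.le (abs_nonneg a) (abs_nonneg b)
    nlinarith
  have hint : Integrable (fun z : ℝ × ℝ => h (z.1 + z.2))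
      ((expMeasure 1).prod (expMeasure 1)) := by
    have i1 : Integrable (fun z : ℝ × ℝ => |z.1| ^ β * (1:ℝ))
        ((expMeasure 1).prod (expMeasure 1)) := (exp_mom hβ.le).mul_prod (integrable_const 1)
    have i2 : Integrable (fun z : ℝ × ℝ => (1:ℝ) * |z.2| ^ β)
        ((expMeasure 1).prod (expMeasure 1)) := (integrable_const 1).mul_prod (exp_mom hβ.le)
    have i3 : Integrable (fun z : ℝ × ℝ =>
        C * (1 + 2 ^ β * (|z.1| ^ β * 1 + 1 * |z.2| ^ β)))
        ((expMeasure 1).prod (expMeasure 1)) :=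
      (((integrable_const (1:ℝ)).add ((i1.add i2).const_mul (2 ^ β))).const_mul C)
    refine i3.mono' ((hc.comp (continuous_fst.add continuous_snd)).aestronglyMeasurable) ?_
    filter_upwards with z
    rw [Real.norm_eq_abs]
    exact habs z.1 z.2
  rw [integral_prod _ hint, integral_exp_meas]
  set gg : ℝ → ℝ := fun y => h y * Real.exp (-y) with hgg
  have inner_eq : ∀ a : ℝ, Real.exp (-a) * ∫ b, h (a + b) ∂(expMeasure 1)
      = ∫ y, Set.indicator (Ioi a) gg y := by
    intro a
    set F : ℝ → ℝ := fun b => Set.indicator (Ioi (0:ℝ)) (fun b => Real.exp (-b) * h (a + b)) b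
      with hF
    have key : ∀ y : ℝ, F (y + -a) = Real.exp a * Set.indicator (Ioi a) gg y := by
      intro y
      by_cases hy : a < y
      · rw [hF]
        dsimp only
        rw [indicator_of_mem (show y + -a ∈ Ioi (0:ℝ) by simp only [mem_Ioi]; linarith),
          indicator_of_mem (show y ∈ Ioi a from hy)]
        rw [show a + (y + -a) = y by ring, show -(y + -a) = a + -y by ring, Real.exp_add, hgg]
        ring
      · rw [hF]
        dsimp only
        rw [indicator_of_notMem (show y + -a ∉ Ioi (0:ℝ) by simp only [mem_Ioi]; push_neg; linarith),
          indicator_of_notMem (show y ∉ Ioi a from hy), mul_zero]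
    have tr := integral_add_right_eq_self (μ := volume) F (-a)
    calc Real.exp (-a) * ∫ b, h (a + b) ∂(expMeasure 1)
        = Real.exp (-a) * ∫ b, F b := by
          rw [integral_exp_meas, hF, integral_indicator measurableSet_Ioi]
      _ = Real.exp (-a) * ∫ y, F (y + -a) := by rw [tr]
      _ = Real.exp (-a) * ∫ y, Real.exp a * Set.indicator (Ioi a) gg y := by
          congr 1; exact integral_congr_ae (Eventually.of_forall key)
      _ = Real.exp (-a) * (Real.exp a * ∫ y, Set.indicator (Ioi a) gg y) := by
          rw [integral_const_mul]
      _ = ∫ y, Set.indicator (Ioi a) gg y := by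
          rw [← mul_assoc, ← Real.exp_add]; simp
  simp_rw [inner_eq]
  -- measurability of the kernel on the product
  have hgg_cont : Continuous gg := hc.mul (Real.continuous_exp.comp continuous_neg)
  have huncurry : AEStronglyMeasurable
      (Function.uncurry fun a y => Set.indicator (Ioi a) gg y)
      ((volume.restrict (Ioi (0:ℝ))).prod volume) := by
    have heq : (Function.uncurry fun a y => Set.indicator (Ioi a) gg y)
        = Set.indicator {p : ℝ × ℝ | p.1 < p.2} (fun p => gg p.2) := by
      funext p
      by_cases hp : p.1 < p.2 <;>
        simp [Function.uncurry, Set.indicator, hp]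
    rw [heq]
    exact ((hgg_cont.comp continuous_snd).aestronglyMeasurable).indicator
      (measurableSet_lt measurable_fst measurable_snd)
  have hkint : Integrable (Function.uncurry fun a y => Set.indicator (Ioi a) gg y)
      ((volume.restrict (Ioi (0:ℝ))).prod volume) := by
    rw [integrable_prod_iff' huncurry]
    constructor
    · filter_upwards with y
      have heq2 : (fun a => Set.indicator (Ioi a) gg y)
          = Set.indicator (Iio y) (fun _ => gg y) := by
        funext a; by_cases hay : a < y <;> simp [Set.indicator, hay]
      simp only [Function.uncurry]
      rw [heq2, integrable_indicator_iff measurableSet_Iio]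
      refine integrableOn_const (ne_of_lt ?_)
      rw [Measure.restrict_apply measurableSet_Iio, Set.Iio_inter_Ioi, Real.volume_Ioo]
      exact ENNReal.ofReal_lt_top
    · have heq3 : (fun y => ∫ a in Ioi (0:ℝ),
          ‖(Function.uncurry fun a y => Set.indicator (Ioi a) gg y) (a, y)‖)
          = Set.indicator (Ioi (0:ℝ)) (fun y => y * ‖gg y‖) := by
        funext y
        have heq4 : (fun a => ‖Set.indicator (Ioi a) gg y‖)
            = Set.indicator (Iio y) (fun _ => ‖gg y‖) := by
          funext a; by_cases hay : a < y <;> simp [Set.indicator, hay]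
        simp only [Function.uncurry]
        rw [heq4, slice_integral]
        by_cases hy : (0:ℝ) < y <;> simp [Set.indicator, hy]
      rw [heq3, integrable_indicator_iff measurableSet_Ioi]
      refine Integrable.mono'
        (g := fun y => C * (Real.exp (-y) * y ^ (1:ℝ) + Real.exp (-y) * y ^ (β + 1)))
        (((integrableOn_exp_rpow zero_le_one).add
          (integrableOn_exp_rpow (by linarith))).const_mul C)
        ((continuous_id.mul hgg_cont.norm).aestronglyMeasurable.restrict) ?_
      filter_upwards [ae_restrict_mem measurableSet_Ioi] with y hy
      simp only [mem_Ioi] at hy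
      have h1 : ‖y * ‖gg y‖‖ = y * (|h y| * Real.exp (-y)) := by
        rw [Real.norm_eq_abs, abs_of_nonneg (mul_nonneg hy.le (norm_nonneg _)),
          Real.norm_eq_abs, hgg]
        rw [abs_mul, abs_of_pos (Real.exp_pos _)]
      rw [h1]
      have h2 : |h y| ≤ C * (1 + y ^ β) := by
        have := hb y; rwa [abs_of_pos hy] at this
      have h3 : y ^ (β + 1) = y ^ β * y := Real.rpow_add_one' hy.le (by linarith)
      have h4 : y ^ (1:ℝ) = y := Real.rpow_one y
      have hexp : (0:ℝ) < Real.exp (-y) := Real.exp_pos _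
      have hyβ : (0:ℝ) ≤ y ^ β := Real.rpow_nonneg hy.le β
      rw [h3, h4]
      nlinarith [mul_le_mul_of_nonneg_left h2 (mul_nonneg hy.le hexp.le)]
  have swap := integral_integral_swap (μ := volume.restrict (Ioi (0:ℝ))) (ν := volume)
    (f := fun a y => Set.indicator (Ioi a) gg y) hkint
  rw [swap]
  have final : ∀ y : ℝ, (∫ a in Ioi (0:ℝ), Set.indicator (Ioi a) gg y)
      = Set.indicator (Ioi (0:ℝ)) (fun y' => y' * gg y') y := by
    intro y
    have heq2 : (fun a => Set.indicator (Ioi a) gg y)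
        = Set.indicator (Iio y) (fun _ => gg y) := by
      funext a; by_cases hay : a < y <;> simp [Set.indicator, hay]
    rw [heq2, slice_integral]
    by_cases hy : (0:ℝ) < y <;> simp [Set.indicator, hy]
  simp_rw [final]
  rw [integral_indicator measurableSet_Ioi, integral_exp_meas]
  apply setIntegral_congr_fun measurableSet_Ioi
  intro y _
  rw [hgg]; ring

-- three-term rpow bound
lemma rpow_add3_le {β : ℝ} (hβ : 0 ≤ β) {x y z : ℝ} (hx : 0 ≤ x) (hy : 0 ≤ y) (hz : 0 ≤ z) :
    (x + y + z) ^ β ≤ 4 ^ β * (x ^ β + y ^ β + z ^ β) := by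
  have h1 := rpow_add_le_aux hβ (by linarith : (0:ℝ) ≤ x + y) hz
  have h2 := rpow_add_le_aux hβ hx hy
  have h4 : (4:ℝ) ^ β = 2 ^ β * 2 ^ β := by
    rw [← Real.mul_rpow (by norm_num) (by norm_num)]; norm_num
  have h2pos : (0:ℝ) < 2 ^ β := Real.rpow_pos_of_pos (by norm_num) β
  have hzβ : (0:ℝ) ≤ z ^ β := Real.rpow_nonneg hz β
  have hxβ : (0:ℝ) ≤ x ^ β := Real.rpow_nonneg hx β
  have hyβ : (0:ℝ) ≤ y ^ β := Real.rpow_nonneg hy β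
  have h2ge1 : (1:ℝ) ≤ 2 ^ β := Real.one_le_rpow (by norm_num) hβ
  nlinarith [mul_le_mul_of_nonneg_left h2 h2pos.le, mul_le_mul_of_nonneg_right h2ge1 (mul_nonneg h2pos.le hzβ)]

lemma sum_rpow_bound {n : ℕ} {β : ℝ} (hβ : 0 < β) (x v : Fin n → ℝ) :
    |∑ j, x j * v j| ^ β
      ≤ ((1 + ∑ j, |x j|) * n) ^ β * ∑ j, |v j| ^ β := by
  rcases Nat.eq_zero_or_pos n with hn | hn
  · subst hn
    simp [Real.zero_rpow hβ.ne']
  have hM : (0:ℝ) < 1 + ∑ j, |x j| := by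
    have : (0:ℝ) ≤ ∑ j, |x j| := Finset.sum_nonneg fun j _ => abs_nonneg _
    linarith
  set M := 1 + ∑ j, |x j| with hMdef
  obtain ⟨j₀, -, hj₀⟩ := Finset.exists_max_image Finset.univ (fun j => |v j|)
    ⟨⟨0, hn⟩, Finset.mem_univ _⟩
  have h1 : |∑ j, x j * v j| ≤ M * n * |v j₀| := by
    calc |∑ j, x j * v j| ≤ ∑ j, |x j * v j| := Finset.abs_sum_le_sum_abs _ _
      _ ≤ ∑ j : Fin n, M * |v j₀| := by
          refine Finset.sum_le_sum fun j _ => ?_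
          rw [abs_mul]
          have hxj : |x j| ≤ M := by
            rw [hMdef]
            have : |x j| ≤ ∑ j, |x j| :=
              Finset.single_le_sum (fun j _ => abs_nonneg (x j)) (Finset.mem_univ j)
            linarith
          have := hj₀ j (Finset.mem_univ j)
          nlinarith [abs_nonneg (v j), abs_nonneg (x j), abs_nonneg (v j₀)]
      _ = M * n * |v j₀| := by
          rw [Finset.sum_const, Finset.card_univ, Fintype.card_fin, nsmul_eq_mul]; ring
  calc |∑ j, x j * v j| ^ β ≤ (M * n * |v j₀|) ^ β :=
        Real.rpow_le_rpow (abs_nonneg _) h1 hβ.le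
    _ = (M * n) ^ β * |v j₀| ^ β := by
        rw [Real.mul_rpow (by positivity) (abs_nonneg _)]
    _ ≤ (M * n) ^ β * ∑ j, |v j| ^ β := by
        have hone : |v j₀| ^ β ≤ ∑ j, |v j| ^ β :=
          Finset.single_le_sum (fun j _ => Real.rpow_nonneg (abs_nonneg _) β)
            (Finset.mem_univ j₀)
        have : (0:ℝ) ≤ (M * n) ^ β := Real.rpow_nonneg (by positivity) β
        nlinarith

set_option maxHeartbeats 1000000 in
/-- **Derivative identity for exponentials** (Lemma 2.2, second part):
for `Φ` a `C¹` function of moderate growth, i.i.d. standard exponentials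
`𝓔₁, …, 𝓔ₙ, 𝓔, 𝓔'` and `S_x = ∑ x_j 𝓔_j`, the function `u ↦ E Φ(S_x + u𝓔)` is
differentiable with `(∂/∂u) E Φ(S_x + u𝓔) = E Φ'(S_x + u𝓔 + u𝓔')`. -/
theorem exp_deriv_in_coefficient
    {Ω : Type*} [MeasurableSpace Ω] (μ : Measure Ω) [IsProbabilityMeasure μ]
    (Φ : ℝ → ℝ) (hΦ : ContDiff ℝ 1 Φ) (β : ℝ) (hβ : 0 < β)
    (hgrow : Φ =O[cocompact ℝ] fun t => |t| ^ β)
    (hgrow' : (deriv Φ) =O[cocompact ℝ] fun t => |t| ^ β)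
    (n : ℕ) (x : Fin n → ℝ)
    (E : Fin (n + 2) → Ω → ℝ) (hmeas : ∀ j, Measurable (E j))
    (hindep : iIndepFun E μ)
    (hlaw : ∀ j, Measure.map (E j) μ = expMeasure 1) :
    ∀ u : ℝ,
      HasDerivAt (fun w => ∫ ω, Φ ((∑ j : Fin n, x j * E ⟨j.1, by omega⟩ ω)
            + w * E ⟨n, by omega⟩ ω) ∂μ)
        (∫ ω, deriv Φ ((∑ j : Fin n, x j * E ⟨j.1, by omega⟩ ω)
            + u * E ⟨n, by omega⟩ ω + u * E ⟨n + 1, by omega⟩ ω) ∂μ) u := by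
  intro u
  classical
  have hΦc : Continuous Φ := hΦ.continuous
  have hΦ'c : Continuous (deriv Φ) := (hΦ.iterate_deriv' 0 1).continuous
  obtain ⟨C, hCpos, hbΦ⟩ := growth_bound hΦc hβ hgrow
  obtain ⟨C', hC'pos, hbΦ'⟩ := growth_bound hΦ'c hβ hgrow'
  set S : Ω → ℝ := fun ω => ∑ j : Fin n, x j * E ⟨j.1, by omega⟩ ω with hSdef
  set A : Ω → ℝ := E ⟨n, by omega⟩ with hAdef
  set B : Ω → ℝ := E ⟨n + 1, by omega⟩ with hBdef
  have hS : Measurable S := by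
    apply Finset.measurable_sum
    intro j _
    exact (hmeas _).const_mul (x j)
  have hA : Measurable A := hmeas _
  have hB : Measurable B := hmeas _
  set ν : Measure ℝ := Measure.map S μ with hνdef
  haveI : IsProbabilityMeasure ν := Measure.isProbabilityMeasure_map hS.aemeasurable
  -- independence of S and (A, B)
  set sfin : Finset (Fin (n + 2)) := Finset.univ.filter (fun i => (i : ℕ) < n) with hsfin
  set tfin : Finset (Fin (n + 2)) := {⟨n, by omega⟩, ⟨n + 1, by omega⟩} with htfin
  have hst : Disjoint sfin tfin := by
    rw [Finset.disjoint_left]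
    intro i hi hit
    rw [hsfin, Finset.mem_filter] at hi
    rw [htfin, Finset.mem_insert, Finset.mem_singleton] at hit
    rcases hit with h | h <;> rw [h] at hi <;> simp at hi <;> omega
  have hbase := hindep.indepFun_finset sfin tfin hst hmeas
  have hmemS : ∀ j : Fin n, (⟨j.1, by omega⟩ : Fin (n + 2)) ∈ sfin := by
    intro j
    rw [hsfin, Finset.mem_filter]
    exact ⟨Finset.mem_univ _, j.2⟩
  have hmemA : (⟨n, by omega⟩ : Fin (n + 2)) ∈ tfin := by
    rw [htfin]; exact Finset.mem_insert_self _ _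
  have hmemB : (⟨n + 1, by omega⟩ : Fin (n + 2)) ∈ tfin := by
    rw [htfin]; exact Finset.mem_insert_of_mem (Finset.mem_singleton_self _)
  set g : (sfin → ℝ) → ℝ := fun v => ∑ j : Fin n, x j * v ⟨⟨j.1, by omega⟩, hmemS j⟩
    with hgdef
  set ψ : (tfin → ℝ) → ℝ × ℝ := fun v => (v ⟨⟨n, by omega⟩, hmemA⟩, v ⟨⟨n+1, by omega⟩, hmemB⟩)
    with hψdef
  have hgm : Measurable g := by
    rw [hgdef]
    refine Finset.measurable_sum Finset.univ fun j _ => ?_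
    have hm : Measurable (fun v : {y // y ∈ sfin} → ℝ => v ⟨⟨j.1, by omega⟩, hmemS j⟩) :=
      measurable_pi_apply _
    exact hm.const_mul (x j)
  have hψm : Measurable ψ := (measurable_pi_apply _).prodMk (measurable_pi_apply _)
  have hS_AB : IndepFun S (fun ω => (A ω, B ω)) μ := hbase.comp hgm hψm
  have hS_A : IndepFun S A μ :=
    hS_AB.comp measurable_id measurable_fst
  have hA_B : IndepFun A B μ := by
    refine hindep.indepFun ?_
    intro hcontra
    rw [Fin.mk.injEq] at hcontra
    omega
  -- joint laws
  have hmapAB : Measure.map (fun ω => (A ω, B ω)) μ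
      = (expMeasure 1).prod (expMeasure 1) := by
    rw [(indepFun_iff_map_prod_eq_prod_map_map hA.aemeasurable hB.aemeasurable).1 hA_B]
    rw [hAdef, hBdef, hlaw, hlaw]
  have hmap2 : Measure.map (fun ω => (S ω, A ω)) μ = ν.prod (expMeasure 1) := by
    rw [(indepFun_iff_map_prod_eq_prod_map_map hS.aemeasurable hA.aemeasurable).1 hS_A]
    rw [hAdef, hlaw]
  have hmap3 : Measure.map (fun ω => (S ω, (A ω, B ω))) μ
      = ν.prod ((expMeasure 1).prod (expMeasure 1)) := by
    rw [(indepFun_iff_map_prod_eq_prod_map_map hS.aemeasurable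
      (hA.prodMk hB).aemeasurable).1 hS_AB, hmapAB]
  -- continuity helpers
  have hcontrpow : Continuous (fun y : ℝ => |y| ^ β) :=
    continuous_abs.rpow_const (fun _ => Or.inr hβ.le)
  -- moments
  have hmom_exp : ∀ i : Fin (n + 2), Integrable (fun ω => |E i ω| ^ β) μ := by
    intro i
    have h1 : Integrable (fun y : ℝ => |y| ^ β) (Measure.map (E i) μ) := by
      rw [hlaw i]; exact exp_mom hβ.le
    exact (integrable_map_measure hcontrpow.aestronglyMeasurable
      (hmeas i).aemeasurable).1 h1
  have hνmom : Integrable (fun s => |s| ^ β) ν := by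
    rw [hνdef, integrable_map_measure hcontrpow.aestronglyMeasurable hS.aemeasurable]
    have hdom : Integrable (fun ω => ((1 + ∑ j, |x j|) * (n:ℝ)) ^ β
        * ∑ j : Fin n, |E ⟨j.1, by omega⟩ ω| ^ β) μ :=
      (integrable_finset_sum Finset.univ fun j _ => hmom_exp ⟨j.1, by omega⟩).const_mul _
    refine hdom.mono' ((hcontrpow.measurable.comp hS).aestronglyMeasurable) ?_
    filter_upwards with ω
    have h2 : ‖|S ω| ^ β‖ = |S ω| ^ β := by
      rw [Real.norm_eq_abs, abs_of_nonneg (Real.rpow_nonneg (abs_nonneg _) β)]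
    show ‖|S ω| ^ β‖ ≤ _
    rw [h2]
    exact sum_rpow_bound hβ x (fun j => E ⟨j.1, by omega⟩ ω)
  have hexp1 : Integrable (fun y : ℝ => |y|) (expMeasure 1) := by
    have h1 := exp_mom (zero_le_one (α := ℝ))
    simpa [Real.rpow_one] using h1
  -- rewriting the integrals through the joint laws
  have hint_rw : ∀ w : ℝ, ∫ ω, Φ (S ω + w * A ω) ∂μ
      = ∫ p : ℝ × ℝ, Φ (p.1 + w * p.2) ∂(ν.prod (expMeasure 1)) := by
    intro w
    have hmb : AEStronglyMeasurable (fun p : ℝ × ℝ => Φ (p.1 + w * p.2))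
        (Measure.map (fun ω => (S ω, A ω)) μ) :=
      (hΦc.comp (continuous_fst.add (continuous_const.mul continuous_snd))).aestronglyMeasurable
    have h1 := integral_map (hS.aemeasurable.prodMk hA.aemeasurable) hmb
    rw [hmap2] at h1
    exact h1.symm
  have h3_rw : ∫ ω, deriv Φ (S ω + u * A ω + u * B ω) ∂μ
      = ∫ q : ℝ × ℝ × ℝ, deriv Φ (q.1 + u * q.2.1 + u * q.2.2)
          ∂(ν.prod ((expMeasure 1).prod (expMeasure 1))) := by
    have hmb : AEStronglyMeasurable
        (fun q : ℝ × ℝ × ℝ => deriv Φ (q.1 + u * q.2.1 + u * q.2.2))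
        (Measure.map (fun ω => (S ω, (A ω, B ω))) μ) :=
      (hΦ'c.comp (((continuous_fst.add
        (continuous_const.mul (continuous_fst.comp continuous_snd))).add
        (continuous_const.mul (continuous_snd.comp continuous_snd))))).aestronglyMeasurable
    have h1 := integral_map (hS.aemeasurable.prodMk
      (hA.aemeasurable.prodMk hB.aemeasurable)) hmb
    rw [hmap3] at h1
    exact h1.symm
  -- bound for the derivative integrand
  set c : ℝ := |u| + 1 with hcdef
  have hc0 : (0:ℝ) ≤ c := by rw [hcdef]; positivity
  set bound : ℝ × ℝ → ℝ := fun p =>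
    C' * ((1:ℝ) * |p.2|) + (C' * 2 ^ β) * (|p.1| ^ β * |p.2|)
      + (C' * 2 ^ β * c ^ β) * ((1:ℝ) * (|p.2| ^ β * |p.2|)) with hbddef
  have hbound_int : Integrable bound (ν.prod (expMeasure 1)) := by
    rw [hbddef]
    exact ((((integrable_const (1:ℝ)).mul_prod hexp1).const_mul C').add
      ((hνmom.mul_prod hexp1).const_mul (C' * 2 ^ β))).add
      (((integrable_const (1:ℝ)).mul_prod (exp_mom_mul hβ.le)).const_mul (C' * 2 ^ β * c ^ β))
  have h_bound : ∀ p : ℝ × ℝ, ∀ w ∈ Metric.ball u 1,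
      ‖deriv Φ (p.1 + w * p.2) * p.2‖ ≤ bound p := by
    intro p w hw
    have hwc : |w| ≤ c := by
      rw [hcdef]
      have := abs_sub_abs_le_abs_sub w u
      rw [Metric.mem_ball, Real.dist_eq] at hw
      linarith
    have e2 : |p.1 + w * p.2| ≤ |p.1| + c * |p.2| := by
      refine (abs_add_le _ _).trans ?_
      rw [abs_mul]
      have := mul_le_mul_of_nonneg_right hwc (abs_nonneg p.2)
      linarith
    have e3 : |p.1 + w * p.2| ^ β ≤ 2 ^ β * |p.1| ^ β + 2 ^ β * c ^ β * |p.2| ^ β := by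
      refine (Real.rpow_le_rpow (abs_nonneg _) e2 hβ.le).trans ?_
      have h1 := rpow_add_le_aux hβ.le (abs_nonneg p.1) (mul_nonneg hc0 (abs_nonneg p.2))
      rw [Real.mul_rpow hc0 (abs_nonneg p.2)] at h1
      linarith [h1]
    have e1 : |deriv Φ (p.1 + w * p.2)| ≤ C' * (1 + |p.1 + w * p.2| ^ β) := hbΦ' _
    rw [norm_mul, Real.norm_eq_abs, Real.norm_eq_abs]
    have e4 : |deriv Φ (p.1 + w * p.2)| * |p.2| ≤ C' * (1 + |p.1 + w * p.2| ^ β) * |p.2| :=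
      mul_le_mul_of_nonneg_right e1 (abs_nonneg _)
    refine e4.trans ?_
    rw [hbddef]
    dsimp only
    have h5 := mul_le_mul_of_nonneg_right e3 (abs_nonneg p.2)
    have h6 : (0:ℝ) ≤ |p.2| := abs_nonneg _
    have h7 : (0:ℝ) ≤ |p.1| ^ β := Real.rpow_nonneg (abs_nonneg _) β
    have h8 : (0:ℝ) ≤ |p.2| ^ β := Real.rpow_nonneg (abs_nonneg _) β
    have h9 : (0:ℝ) ≤ c ^ β := Real.rpow_nonneg hc0 β
    have h10 : (0:ℝ) < 2 ^ β := Real.rpow_pos_of_pos two_pos β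
    nlinarith [mul_le_mul_of_nonneg_left h5 hC'pos.le]
  -- integrability of F at u
  have hFint : Integrable (fun p : ℝ × ℝ => Φ (p.1 + u * p.2)) (ν.prod (expMeasure 1)) := by
    refine Integrable.mono'
      (g := fun p : ℝ × ℝ => C * 1 + (C * 2 ^ β) * (|p.1| ^ β * (1:ℝ))
        + (C * 2 ^ β * |u| ^ β) * ((1:ℝ) * |p.2| ^ β))
      (((integrable_const _).add
        ((hνmom.mul_prod (integrable_const 1)).const_mul (C * 2 ^ β))).add
        (((integrable_const (1:ℝ)).mul_prod (exp_mom hβ.le)).const_mul (C * 2 ^ β * |u| ^ β)))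
      ((hΦc.comp (continuous_fst.add (continuous_const.mul
        continuous_snd))).aestronglyMeasurable) ?_
    filter_upwards with p
    rw [Real.norm_eq_abs]
    have e2 : |p.1 + u * p.2| ≤ |p.1| + |u| * |p.2| := by
      refine (abs_add_le _ _).trans ?_
      rw [abs_mul]
    have e3 : |p.1 + u * p.2| ^ β ≤ 2 ^ β * |p.1| ^ β + 2 ^ β * |u| ^ β * |p.2| ^ β := by
      refine (Real.rpow_le_rpow (abs_nonneg _) e2 hβ.le).trans ?_
      have h1 := rpow_add_le_aux hβ.le (abs_nonneg p.1)
        (mul_nonneg (abs_nonneg u) (abs_nonneg p.2))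
      rw [Real.mul_rpow (abs_nonneg u) (abs_nonneg p.2)] at h1
      linarith
    have e1 : |Φ (p.1 + u * p.2)| ≤ C * (1 + |p.1 + u * p.2| ^ β) := hbΦ _
    nlinarith [mul_le_mul_of_nonneg_left e3 hCpos.le]
  -- differentiability pointwise
  have h_diff : ∀ p : ℝ × ℝ, ∀ w ∈ Metric.ball u 1,
      HasDerivAt (fun w : ℝ => Φ (p.1 + w * p.2)) (deriv Φ (p.1 + w * p.2) * p.2) w := by
    intro p w _
    have h1 : HasDerivAt (fun w : ℝ => p.1 + w * p.2) p.2 w := by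
      simpa using ((hasDerivAt_id w).mul_const p.2).const_add p.1
    have h2 : HasDerivAt Φ (deriv Φ (p.1 + w * p.2)) (p.1 + w * p.2) :=
      ((hΦ.differentiable one_ne_zero) _).hasDerivAt
    exact h2.comp w h1
  -- apply dominated differentiation
  have main := hasDerivAt_integral_of_dominated_loc_of_deriv_le
    (F := fun w (p : ℝ × ℝ) => Φ (p.1 + w * p.2))
    (F' := fun w (p : ℝ × ℝ) => deriv Φ (p.1 + w * p.2) * p.2)
    (μ := ν.prod (expMeasure 1)) (x₀ := u) (bound := bound) (Metric.ball_mem_nhds u zero_lt_one)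
    (Eventually.of_forall fun w => (hΦc.comp (continuous_fst.add
      (continuous_const.mul continuous_snd))).aestronglyMeasurable)
    hFint
    (((hΦ'c.comp (continuous_fst.add (continuous_const.mul
      continuous_snd))).mul continuous_snd).aestronglyMeasurable)
    (Eventually.of_forall fun p => h_bound p)
    hbound_int
    (Eventually.of_forall fun p => h_diff p)
  obtain ⟨hF'int, hder⟩ := main
  -- identify the derivative value
  have hval : ∫ q : ℝ × ℝ × ℝ, deriv Φ (q.1 + u * q.2.1 + u * q.2.2)
        ∂(ν.prod ((expMeasure 1).prod (expMeasure 1)))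
      = ∫ p : ℝ × ℝ, deriv Φ (p.1 + u * p.2) * p.2 ∂(ν.prod (expMeasure 1)) := by
    have hint3 : Integrable (fun q : ℝ × ℝ × ℝ => deriv Φ (q.1 + u * q.2.1 + u * q.2.2))
        (ν.prod ((expMeasure 1).prod (expMeasure 1))) := by
      refine Integrable.mono'
        (g := fun q : ℝ × ℝ × ℝ => C' * 1 + (C' * 4 ^ β) * (|q.1| ^ β * (1:ℝ))
          + (C' * 4 ^ β * |u| ^ β) * ((1:ℝ) * (|q.2.1| ^ β * (1:ℝ)))
          + (C' * 4 ^ β * |u| ^ β) * ((1:ℝ) * ((1:ℝ) * |q.2.2| ^ β)))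
        ((((integrable_const _).add
          ((hνmom.mul_prod (integrable_const 1)).const_mul (C' * 4 ^ β))).add
          (((integrable_const (1:ℝ)).mul_prod
            ((exp_mom hβ.le).mul_prod (integrable_const 1))).const_mul
            (C' * 4 ^ β * |u| ^ β))).add
          (((integrable_const (1:ℝ)).mul_prod
            ((integrable_const (1:ℝ)).mul_prod (exp_mom hβ.le))).const_mul
            (C' * 4 ^ β * |u| ^ β)))
        ((hΦ'c.comp ((continuous_fst.add
          (continuous_const.mul (continuous_fst.comp continuous_snd))).add
          (continuous_const.mul
            (continuous_snd.comp continuous_snd)))).aestronglyMeasurable) ?_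
      filter_upwards with q
      rw [Real.norm_eq_abs]
      have e2 : |q.1 + u * q.2.1 + u * q.2.2| ≤ |q.1| + |u| * |q.2.1| + |u| * |q.2.2| :=
        calc |q.1 + u * q.2.1 + u * q.2.2| ≤ |q.1 + u * q.2.1| + |u * q.2.2| := abs_add_le _ _
          _ ≤ |q.1| + |u * q.2.1| + |u * q.2.2| := by linarith [abs_add_le q.1 (u * q.2.1)]
          _ = |q.1| + |u| * |q.2.1| + |u| * |q.2.2| := by rw [abs_mul, abs_mul]
      have e3 : |q.1 + u * q.2.1 + u * q.2.2| ^ β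
          ≤ 4 ^ β * |q.1| ^ β + 4 ^ β * |u| ^ β * |q.2.1| ^ β
            + 4 ^ β * |u| ^ β * |q.2.2| ^ β := by
        refine (Real.rpow_le_rpow (abs_nonneg _) e2 hβ.le).trans ?_
        have h1 := rpow_add3_le hβ.le (abs_nonneg q.1)
          (mul_nonneg (abs_nonneg u) (abs_nonneg q.2.1))
          (mul_nonneg (abs_nonneg u) (abs_nonneg q.2.2))
        rw [Real.mul_rpow (abs_nonneg u) (abs_nonneg q.2.1),
          Real.mul_rpow (abs_nonneg u) (abs_nonneg q.2.2)] at h1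
        linarith
      have e1 : |deriv Φ (q.1 + u * q.2.1 + u * q.2.2)|
          ≤ C' * (1 + |q.1 + u * q.2.1 + u * q.2.2| ^ β) := hbΦ' _
      nlinarith [mul_le_mul_of_nonneg_left e3 hC'pos.le]
    rw [integral_prod _ hint3, integral_prod _ hF'int]
    refine integral_congr_ae (Eventually.of_forall fun s => ?_)
    have hcont_s : Continuous (fun t : ℝ => deriv Φ (s + u * t)) :=
      hΦ'c.comp (continuous_const.add (continuous_const.mul continuous_id))
    set Cs : ℝ := C' * (1 + 2 ^ β * |s| ^ β + 2 ^ β * |u| ^ β) with hCsdef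
    have hbs : ∀ t : ℝ, |deriv Φ (s + u * t)| ≤ Cs * (1 + |t| ^ β) := by
      intro t
      have e2 : |s + u * t| ≤ |s| + |u| * |t| := by
        refine (abs_add_le _ _).trans ?_
        rw [abs_mul]
      have e3 : |s + u * t| ^ β ≤ 2 ^ β * |s| ^ β + 2 ^ β * |u| ^ β * |t| ^ β := by
        refine (Real.rpow_le_rpow (abs_nonneg _) e2 hβ.le).trans ?_
        have h1 := rpow_add_le_aux hβ.le (abs_nonneg s)
          (mul_nonneg (abs_nonneg u) (abs_nonneg t))
        rw [Real.mul_rpow (abs_nonneg u) (abs_nonneg t)] at h1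
        linarith
      have e1 : |deriv Φ (s + u * t)| ≤ C' * (1 + |s + u * t| ^ β) := hbΦ' _
      rw [hCsdef]
      have h7 : (0:ℝ) ≤ |s| ^ β := Real.rpow_nonneg (abs_nonneg _) β
      have h8 : (0:ℝ) ≤ |t| ^ β := Real.rpow_nonneg (abs_nonneg _) β
      have h9 : (0:ℝ) ≤ |u| ^ β := Real.rpow_nonneg (abs_nonneg _) β
      have h10 : (0:ℝ) < 2 ^ β := Real.rpow_pos_of_pos two_pos β
      nlinarith [mul_le_mul_of_nonneg_left e3 hC'pos.le,
        mul_nonneg (mul_nonneg h10.le h7) h8, mul_nonneg (mul_nonneg h10.le h9) h8,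
        mul_nonneg hC'pos.le h8, mul_nonneg hC'pos.le (mul_nonneg (mul_nonneg h10.le h7) h8),
        mul_nonneg hC'pos.le (mul_nonneg h10.le h9), mul_nonneg hC'pos.le (mul_nonneg h10.le h7)]
    calc ∫ z : ℝ × ℝ, deriv Φ (s + u * z.1 + u * z.2)
          ∂((expMeasure 1).prod (expMeasure 1))
        = ∫ z : ℝ × ℝ, (fun t => deriv Φ (s + u * t)) (z.1 + z.2)
          ∂((expMeasure 1).prod (expMeasure 1)) := by
          refine integral_congr_ae (Eventually.of_forall fun z => ?_)
          simp only []
          congr 1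
          ring
      _ = ∫ y, y * deriv Φ (s + u * y) ∂(expMeasure 1) := core_conv hcont_s hβ hbs
      _ = ∫ y, deriv Φ (s + u * y) * y ∂(expMeasure 1) := by
          refine integral_congr_ae (Eventually.of_forall fun y => ?_)
          ring
  -- finish
  show HasDerivAt (fun w => ∫ ω, Φ (S ω + w * A ω) ∂μ)
    (∫ ω, deriv Φ (S ω + u * A ω + u * B ω) ∂μ) u
  have hfun : (fun w => ∫ ω, Φ (S ω + w * A ω) ∂μ)
      = fun w => ∫ p : ℝ × ℝ, Φ (p.1 + w * p.2) ∂(ν.prod (expMeasure 1)) :=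
    funext hint_rw
  rw [hfun, h3_rw, hval]
  exact hder
end

section
/- For every s > 0 and every 0 < q < 2, one has ∫_0^∞ (1 − (1 + t²/s)^{−(1+s)/2}) / t^{q+1} dt = (1/q) · Γ(1 − q/2) · Γ((1+q+s)/2) / (s^{q/2} · Γ((1+s)/2)). -/
/-!
Integrate by parts against `d(t^{-q})`, with `c = (1+s)/2`: the boundary terms vanish because
`0 ≤ 1 - (1 + t²/s)^{-c} ≤ min(1, c t²/s)` and `0 < q < 2`, and the integral becomes
`(2c/(qs)) ∫₀^∞ t^{1-q} (1 + t²/s)^{-c-1} dt`. The substitution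
`y = t²/(s + t²)` identifies the latter integral with `s^{1-q/2} B(1 - q/2, c + q/2) / 2`,
and `Γ(c + 1) = c Γ(c)` gives the closed form.
-/

open MeasureTheory Real Set Filter Topology

section
variable {a b : ℝ}

lemma ofReal_rpow_mul_one_sub_rpow {x : ℝ} (hx : x ∈ Icc (0 : ℝ) 1) :
    ((x ^ (a - 1) * (1 - x) ^ (b - 1) : ℝ) : ℂ)
      = (x : ℂ) ^ ((a : ℂ) - 1) * (1 - (x : ℂ)) ^ ((b : ℂ) - 1) := by
  push_cast [Complex.ofReal_cpow hx.1, Complex.ofReal_cpow (sub_nonneg.2 hx.2)]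
  rfl

lemma integrableOn_rpow_mul_one_sub_rpow (ha : 0 < a) (hb : 0 < b) :
    IntegrableOn (fun y : ℝ ↦ y ^ (a - 1) * (1 - y) ^ (b - 1)) (Ioo 0 1) := by
  have h := Complex.betaIntegral_convergent (u := a) (v := b) (by simpa) (by simpa)
  rw [intervalIntegrable_iff_integrableOn_Ioo_of_le zero_le_one] at h
  refine IntegrableOn.congr_fun h.re (fun y hy ↦ ?_) measurableSet_Ioo
  rw [← ofReal_rpow_mul_one_sub_rpow (Ioo_subset_Icc_self hy), RCLike.re_to_complex,
    Complex.ofReal_re]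

lemma integral_rpow_mul_one_sub_rpow (ha : 0 < a) (hb : 0 < b) :
    ∫ y in Ioo (0 : ℝ) 1, y ^ (a - 1) * (1 - y) ^ (b - 1)
      = Gamma a * Gamma b / Gamma (a + b) := by
  have h := Complex.betaIntegral_eq_Gamma_mul_div a b (by simpa) (by simpa)
  rw [Complex.betaIntegral, intervalIntegral.integral_of_le zero_le_one,
    integral_Ioc_eq_integral_Ioo, ← setIntegral_congr_fun measurableSet_Ioo
      (fun y hy ↦ ofReal_rpow_mul_one_sub_rpow (Ioo_subset_Icc_self hy)), integral_complex_ofReal,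
    ← Complex.ofReal_add, Complex.Gamma_ofReal, Complex.Gamma_ofReal, Complex.Gamma_ofReal] at h
  exact_mod_cast h

variable {s : ℝ}

lemma hasDerivAt_one_sub_inv_one_add_sq_div (hs : 0 < s) (t : ℝ) :
    HasDerivAt (fun t : ℝ ↦ 1 - (1 + t ^ 2 / s)⁻¹) (2 * t / s / (1 + t ^ 2 / s) ^ 2) t := by
  have h := (((hasDerivAt_pow 2 t).div_const s).const_add 1).inv (by positivity)
  exact (h.const_sub 1).congr_deriv (by norm_num [neg_div])

lemma strictMonoOn_one_sub_inv_one_add_sq_div (hs : 0 < s) :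
    StrictMonoOn (fun t : ℝ ↦ 1 - (1 + t ^ 2 / s)⁻¹) (Ioi 0) := by
  intro x hx y _ hxy
  have : x ^ 2 / s < y ^ 2 / s :=
    div_lt_div_of_pos_right (pow_lt_pow_left₀ hxy hx.le two_ne_zero) hs
  have := inv_strictAnti₀ (by positivity : 0 < 1 + x ^ 2 / s)
    (by linarith : 1 + x ^ 2 / s < 1 + y ^ 2 / s)
  dsimp only
  linarith

lemma image_one_sub_inv_one_add_sq_div_Ioi (hs : 0 < s) :
    (fun t : ℝ ↦ 1 - (1 + t ^ 2 / s)⁻¹) '' Ioi 0 = Ioo 0 1 := by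
  apply Subset.antisymm
  · rintro _ ⟨t, ht, rfl⟩
    have : 1 < 1 + t ^ 2 / s := lt_add_of_pos_right 1 (by have := ht.out; positivity)
    exact ⟨sub_pos.2 (inv_lt_one_of_one_lt₀ this), sub_lt_self 1 (by positivity)⟩
  · rintro y ⟨hy0, hy1⟩
    have hpos : 0 < s * y / (1 - y) := by have := sub_pos.2 hy1; positivity
    refine ⟨√(s * y / (1 - y)), sqrt_pos.2 hpos, ?_⟩
    simp only [sq_sqrt hpos.le]
    field_simp [(sub_pos.2 hy1).ne']
    ring

lemma abs_deriv_smul_rpow_mul_one_sub_rpow_comp (hs : 0 < s) (a b : ℝ) {t : ℝ}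
    (ht : 0 < t) :
    |2 * t / s / (1 + t ^ 2 / s) ^ 2| • ((1 - (1 + t ^ 2 / s)⁻¹) ^ (a - 1)
        * (1 - (1 - (1 + t ^ 2 / s)⁻¹)) ^ (b - 1))
      = 2 * s ^ (-a) * (t ^ (2 * a - 1) * (1 + t ^ 2 / s) ^ (-(a + b))) := by
  have h1 : 1 - (1 + t ^ 2 / s)⁻¹ = t ^ 2 / s * (1 + t ^ 2 / s)⁻¹ := by field_simp; ring
  set w := 1 + t ^ 2 / s
  have hw : 0 < w := by positivity
  rw [abs_of_pos (by positivity), smul_eq_mul, sub_sub_cancel, h1,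
    mul_rpow (by positivity) (by positivity), div_rpow (by positivity) hs.le,
    ← rpow_natCast t 2, ← rpow_mul ht.le, inv_rpow hw.le, inv_rpow hw.le,
    show 2 * a - 1 = 1 + (2 : ℕ) * (a - 1) by push_cast; ring,
    show -(a + b) = -(2 : ℕ) + (-(a - 1) + -(b - 1)) by push_cast; ring,
    show -a = -1 + -(a - 1) by ring,
    rpow_add ht, rpow_add hw, rpow_add hw, rpow_add hs, rpow_neg hw.le, rpow_neg hw.le,
    rpow_neg hw.le, rpow_neg hs.le, rpow_neg hs.le, rpow_one, rpow_one, rpow_natCast]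
  field_simp

lemma integrableOn_rpow_mul_one_add_sq_div_rpow (hs : 0 < s) (ha : 0 < a) (hb : 0 < b) :
    IntegrableOn (fun t : ℝ ↦ t ^ (2 * a - 1) * (1 + t ^ 2 / s) ^ (-(a + b))) (Ioi 0) := by
  have h := (integrableOn_image_iff_integrableOn_abs_deriv_smul measurableSet_Ioi
    (fun t _ ↦ (hasDerivAt_one_sub_inv_one_add_sq_div hs t).hasDerivWithinAt)
    (strictMonoOn_one_sub_inv_one_add_sq_div hs).injOn
    (fun y ↦ y ^ (a - 1) * (1 - y) ^ (b - 1))).1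
  rw [image_one_sub_inv_one_add_sq_div_Ioi hs] at h
  refine IntegrableOn.congr_fun ((h (integrableOn_rpow_mul_one_sub_rpow ha hb)).const_mul
    (s ^ a / 2)) (fun t ht ↦ ?_) measurableSet_Ioi
  rw [abs_deriv_smul_rpow_mul_one_sub_rpow_comp hs a b ht, rpow_neg hs.le]
  field_simp

lemma integral_rpow_mul_one_add_sq_div_rpow (hs : 0 < s) (ha : 0 < a) (hb : 0 < b) :
    ∫ t in Ioi (0 : ℝ), t ^ (2 * a - 1) * (1 + t ^ 2 / s) ^ (-(a + b))
      = s ^ a * Gamma a * Gamma b / (2 * Gamma (a + b)) := by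
  have h := integral_image_eq_integral_abs_deriv_smul measurableSet_Ioi
    (fun t _ ↦ (hasDerivAt_one_sub_inv_one_add_sq_div hs t).hasDerivWithinAt)
    (strictMonoOn_one_sub_inv_one_add_sq_div hs).injOn
    (fun y ↦ y ^ (a - 1) * (1 - y) ^ (b - 1))
  rw [image_one_sub_inv_one_add_sq_div_Ioi hs, integral_rpow_mul_one_sub_rpow ha hb,
    setIntegral_congr_fun measurableSet_Ioi
      (fun t ht ↦ abs_deriv_smul_rpow_mul_one_sub_rpow_comp hs a b ht),
    integral_const_mul, rpow_neg hs.le] at h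
  have := Gamma_pos_of_pos (add_pos ha hb)
  have := rpow_pos_of_pos hs a
  field_simp at h ⊢
  linarith

end

lemma one_sub_one_add_rpow_neg_le_mul {c x : ℝ} (hc : 0 ≤ c) (hx : -1 < x) :
    1 - (1 + x) ^ (-c) ≤ c * x := by
  have h1x : 0 < 1 + x := by linarith
  have hlog : log (1 + x) ≤ x := by linarith [log_le_sub_one_of_pos h1x]
  have hexp := add_one_le_exp (log (1 + x) * -c)
  rw [rpow_def_of_pos h1x]
  nlinarith [mul_le_mul_of_nonneg_left hlog hc]

section
variable {s c q : ℝ}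

lemma one_sub_one_add_sq_div_rpow_neg_nonneg (hs : 0 < s) (hc : 0 ≤ c) (t : ℝ) :
    0 ≤ 1 - (1 + t ^ 2 / s) ^ (-c) :=
  sub_nonneg.2 (rpow_le_one_of_one_le_of_nonpos (le_add_of_nonneg_right (by positivity))
    (neg_nonpos.2 hc))

lemma one_sub_one_add_sq_div_rpow_neg_le_one (hs : 0 < s) (t : ℝ) :
    1 - (1 + t ^ 2 / s) ^ (-c) ≤ 1 :=
  sub_le_self 1 (by positivity)

lemma one_sub_one_add_sq_div_rpow_neg_le (hs : 0 < s) (hc : 0 ≤ c) (t : ℝ) :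
    1 - (1 + t ^ 2 / s) ^ (-c) ≤ c / s * t ^ 2 := by
  have ht : -1 < t ^ 2 / s := by linarith [div_nonneg (sq_nonneg t) hs.le]
  exact (one_sub_one_add_rpow_neg_le_mul hc ht).trans_eq (by ring)

lemma continuousOn_one_sub_one_add_sq_div_rpow_neg_mul_rpow (hs : 0 < s) (c p : ℝ) :
    ContinuousOn (fun t : ℝ ↦ (1 - (1 + t ^ 2 / s) ^ (-c)) * t ^ p) (Ioi 0) := by
  refine ContinuousOn.mul ?_ (continuousOn_id.rpow_const fun t ht ↦ Or.inl (ne_of_gt ht))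
  exact (Continuous.continuousOn (by fun_prop)).sub
    ((Continuous.continuousOn (by fun_prop)).rpow_const fun t _ ↦ Or.inl (by positivity))

lemma integrableOn_one_sub_one_add_sq_div_rpow_neg_mul_rpow (hs : 0 < s) (hc : 0 ≤ c)
    (hq : 0 < q) (hq2 : q < 2) :
    IntegrableOn (fun t : ℝ ↦ (1 - (1 + t ^ 2 / s) ^ (-c)) * t ^ (-q - 1)) (Ioi 0) := by
  have hcont := continuousOn_one_sub_one_add_sq_div_rpow_neg_mul_rpow hs c (-q - 1)
  rw [← Ioc_union_Ioi_eq_Ioi zero_le_one]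
  refine IntegrableOn.union ?_ ?_
  · have hg : IntegrableOn (fun t : ℝ ↦ c / s * t ^ (1 - q)) (Ioc 0 1) :=
      ((intervalIntegral.intervalIntegrable_rpow' (a := 0) (b := 1) (r := 1 - q)
        (by linarith)).1).const_mul _
    refine hg.mono' ((hcont.mono Ioc_subset_Ioi_self).aestronglyMeasurable measurableSet_Ioc)
      ((ae_restrict_iff' measurableSet_Ioc).2 (ae_of_all _ fun t ht ↦ ?_))
    rw [norm_of_nonneg (mul_nonneg (one_sub_one_add_sq_div_rpow_neg_nonneg hs hc t)
      (rpow_nonneg ht.1.le _)), show 1 - q = 2 + (-q - 1) by ring, rpow_add ht.1,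
      rpow_two, ← mul_assoc]
    exact mul_le_mul_of_nonneg_right (one_sub_one_add_sq_div_rpow_neg_le hs hc t)
      (rpow_nonneg ht.1.le _)
  · refine (integrableOn_Ioi_rpow_of_lt (a := -q - 1) (by linarith) one_pos).mono'
      ((hcont.mono (Ioi_subset_Ioi zero_le_one)).aestronglyMeasurable measurableSet_Ioi)
      ((ae_restrict_iff' measurableSet_Ioi).2 (ae_of_all _ fun t ht ↦ ?_))
    have ht0 : 0 < t := one_pos.trans ht
    rw [norm_of_nonneg (mul_nonneg (one_sub_one_add_sq_div_rpow_neg_nonneg hs hc t)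
      (rpow_nonneg ht0.le _))]
    exact mul_le_of_le_one_left (rpow_nonneg ht0.le _)
      (one_sub_one_add_sq_div_rpow_neg_le_one hs t)

lemma tendsto_one_sub_one_add_sq_div_rpow_neg_mul_rpow_nhdsGT_zero (hs : 0 < s) (hc : 0 ≤ c)
    (hq2 : q < 2) :
    Tendsto (fun t : ℝ ↦ (1 - (1 + t ^ 2 / s) ^ (-c)) * t ^ (-q)) (𝓝[>] 0) (𝓝 0) := by
  have hg : Tendsto (fun t : ℝ ↦ c / s * t ^ (2 - q)) (𝓝[>] 0) (𝓝 0) := by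
    have := (continuousAt_rpow_const 0 (2 - q) (Or.inr (by linarith))).tendsto.const_mul (c / s)
    rw [zero_rpow (by linarith), mul_zero] at this
    exact this.mono_left nhdsWithin_le_nhds
  refine squeeze_zero' ?_ ?_ hg
  · filter_upwards [self_mem_nhdsWithin] with t ht
    exact mul_nonneg (one_sub_one_add_sq_div_rpow_neg_nonneg hs hc t) (rpow_nonneg ht.out.le _)
  · filter_upwards [self_mem_nhdsWithin] with t ht
    rw [show 2 - q = 2 + -q by ring, rpow_add ht.out, rpow_two, ← mul_assoc]
    exact mul_le_mul_of_nonneg_right (one_sub_one_add_sq_div_rpow_neg_le hs hc t)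
      (rpow_nonneg ht.out.le _)

lemma tendsto_one_sub_one_add_sq_div_rpow_neg_mul_rpow_atTop (hs : 0 < s) (hc : 0 ≤ c)
    (hq : 0 < q) :
    Tendsto (fun t : ℝ ↦ (1 - (1 + t ^ 2 / s) ^ (-c)) * t ^ (-q)) atTop (𝓝 0) := by
  refine squeeze_zero' ?_ ?_ (tendsto_rpow_neg_atTop hq)
  · filter_upwards [eventually_gt_atTop 0] with t ht
    exact mul_nonneg (one_sub_one_add_sq_div_rpow_neg_nonneg hs hc t) (rpow_nonneg ht.le _)
  · filter_upwards [eventually_gt_atTop 0] with t ht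
    exact mul_le_of_le_one_left (rpow_nonneg ht.le _)
      (one_sub_one_add_sq_div_rpow_neg_le_one hs t)

lemma integral_one_sub_one_add_sq_div_rpow_neg_mul_rpow_eq (hs : 0 < s) (hc : 0 ≤ c)
    (hq : 0 < q) (hq2 : q < 2) :
    q * ∫ t in Ioi 0, (1 - (1 + t ^ 2 / s) ^ (-c)) * t ^ (-q - 1)
      = 2 * c / s * ∫ t in Ioi 0, t ^ (1 - q) * (1 + t ^ 2 / s) ^ (-c - 1) := by
  have hu (t : ℝ) (_ : t ∈ Ioi 0) : HasDerivAt (fun t : ℝ ↦ 1 - (1 + t ^ 2 / s) ^ (-c))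
      (c * (2 * t / s) * (1 + t ^ 2 / s) ^ (-c - 1)) t := by
    have := (((hasDerivAt_pow 2 t).div_const s).const_add 1).rpow_const (p := -c)
      (Or.inl (by positivity))
    exact (this.const_sub 1).congr_deriv (by push_cast; ring)
  have hv (t : ℝ) (ht : t ∈ Ioi 0) :
      HasDerivAt (fun t : ℝ ↦ t ^ (-q)) (-q * t ^ (-q - 1)) t :=
    hasDerivAt_rpow_const (Or.inl ht.out.ne')
  have hu'v (t : ℝ) (ht : t ∈ Ioi 0) :
      c * (2 * t / s) * (1 + t ^ 2 / s) ^ (-c - 1) * t ^ (-q)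
        = 2 * c / s * (t ^ (1 - q) * (1 + t ^ 2 / s) ^ (-c - 1)) := by
    rw [sub_eq_add_neg 1 q, rpow_add ht.out, rpow_one]
    ring
  have hbeta := integrableOn_rpow_mul_one_add_sq_div_rpow (a := 1 - q / 2) (b := c + q / 2) hs
    (by linarith) (by linarith)
  rw [show 2 * (1 - q / 2) - 1 = 1 - q by ring,
    show -(1 - q / 2 + (c + q / 2)) = -c - 1 by ring] at hbeta
  have h := integral_Ioi_mul_deriv_eq_deriv_mul hu hv
    (IntegrableOn.congr_fun
      ((integrableOn_one_sub_one_add_sq_div_rpow_neg_mul_rpow hs hc hq hq2).const_mul (-q))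
      (fun t _ ↦ mul_left_comm _ _ _) measurableSet_Ioi)
    (IntegrableOn.congr_fun (hbeta.const_mul (2 * c / s)) (fun t ht ↦ (hu'v t ht).symm)
      measurableSet_Ioi)
    (tendsto_one_sub_one_add_sq_div_rpow_neg_mul_rpow_nhdsGT_zero hs hc hq2)
    (tendsto_one_sub_one_add_sq_div_rpow_neg_mul_rpow_atTop hs hc hq)
  rw [setIntegral_congr_fun measurableSet_Ioi hu'v, integral_const_mul,
    setIntegral_congr_fun measurableSet_Ioi (fun t _ ↦ mul_left_comm _ (-q) _),
    integral_const_mul] at h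
  linarith

theorem integral_one_sub_one_add_sq_div_rpow_neg_div_rpow (hs : 0 < s) (hc : 0 < c)
    (hq : 0 < q) (hq2 : q < 2) :
    ∫ t in Ioi 0, (1 - (1 + t ^ 2 / s) ^ (-c)) / t ^ (q + 1)
      = Gamma (1 - q / 2) * Gamma (c + q / 2) / (q * s ^ (q / 2) * Gamma c) := by
  have hibp := integral_one_sub_one_add_sq_div_rpow_neg_mul_rpow_eq hs hc.le hq hq2
  have hbeta := integral_rpow_mul_one_add_sq_div_rpow (a := 1 - q / 2) (b := c + q / 2) hs
    (by linarith) (by linarith)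
  rw [show 2 * (1 - q / 2) - 1 = 1 - q by ring, show 1 - q / 2 + (c + q / 2) = c + 1 by ring,
    show -(c + 1) = -c - 1 by ring, Gamma_add_one hc.ne', rpow_sub hs, rpow_one] at hbeta
  rw [hbeta] at hibp
  rw [setIntegral_congr_fun measurableSet_Ioi
    (g := fun t ↦ (1 - (1 + t ^ 2 / s) ^ (-c)) * t ^ (-q - 1))
    (fun t ht ↦ by rw [div_eq_mul_inv, ← rpow_neg ht.out.le, neg_add'])]
  generalize ∫ t in Ioi 0, (1 - (1 + t ^ 2 / s) ^ (-c)) * t ^ (-q - 1) = I at hibp ⊢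
  have := Gamma_pos_of_pos hc
  have := rpow_pos_of_pos hs (q / 2)
  field_simp at hibp ⊢
  linarith

end

/-- **Evaluation of an auxiliary integral** (Lemma 2.3): for `s > 0` and `0 < q < 2`,
`∫₀^∞ (1 - (1 + t²/s)^{-(1+s)/2}) / t^{q+1} dt
  = (1/q) Γ(1 - q/2) Γ((1+q+s)/2) / (s^{q/2} Γ((1+s)/2))`. -/
theorem integral_one_sub_rpow_div
    (s q : ℝ) (hs : 0 < s) (hq : 0 < q) (hq' : q < 2) :
    ∫ t in Set.Ioi (0 : ℝ),
        (1 - (1 + t ^ 2 / s) ^ (-(1 + s) / 2)) / t ^ (q + 1)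
      = (1 / q) * Real.Gamma (1 - q / 2)
          * (Real.Gamma ((1 + q + s) / 2) / (s ^ (q / 2) * Real.Gamma ((1 + s) / 2))) := by
  rw [neg_div, integral_one_sub_one_add_sq_div_rpow_neg_div_rpow hs (by positivity) hq hq',
    show (1 + s) / 2 + q / 2 = (1 + q + s) / 2 by ring]
  field_simp
end

section
/- For β > 0 define Ψ_β(x) = Γ(x + β + 1/2) / (x^β · Γ(x + 1/2)) for x > 0. Then for every β > 0, the function x ↦ Ψ_β(x) is strictly decreasing on (0, ∞) and Ψ_β(x) → 1 as x → ∞. -/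
open Filter Real

/-- The special function `Ψ_β(x) = Γ(x + β + 1/2) / (x^β Γ(x + 1/2))`. -/
noncomputable def Psi (β x : ℝ) : ℝ :=
  Real.Gamma (x + β + 1 / 2) / (x ^ β * Real.Gamma (x + 1 / 2))

/-!
Write `log Ψ_β(x) = log Γ(x + β + 1/2) - log Γ(x + 1/2) - β log x`. Log-convexity of `Γ` squeezes
`log Γ(x + a) - log Γ(x) - a log x` to `0` for `0 ≤ a ≤ 1` (Wendel's limit), and the functional
equation extends this to all `a ≥ 0`; hence `log Ψ_β → 0`. By the functional equation again,
`log Ψ_β(t) - log Ψ_β(t + 1) = β log (1 + 1/t) - log (1 + β / (t + 1/2))`, which is strictly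
decreasing in `t`. So for `x < y` the differences `log Ψ_β(x + n) - log Ψ_β(y + n)` decrease
strictly in `n` towards `0`, and in particular `log Ψ_β(x) > log Ψ_β(y)`.
-/

open Set Topology

lemma log_Gamma_add_one {x : ℝ} (hx : 0 < x) : log (Gamma (x + 1)) = log x + log (Gamma x) := by
  rw [Gamma_add_one hx.ne', log_mul hx.ne' (Gamma_pos_of_pos hx).ne']

noncomputable def logGammaRatio (a x : ℝ) : ℝ :=
  log (Gamma (x + a)) - log (Gamma x) - a * log x

section logGammaRatio

variable {a x : ℝ}

/- Both bounds are log-convexity of `Γ`: `x + a` lies between `x` and `x + 1`, and `x + 1` between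
`x + a` and `x + a + 1`. -/

lemma logGammaRatio_nonpos (ha₀ : 0 ≤ a) (ha₁ : a ≤ 1) (hx : 0 < x) : logGammaRatio a x ≤ 0 := by
  have h := convexOn_log_Gamma.2 (mem_Ioi.2 hx) (mem_Ioi.2 (by linarith : 0 < x + 1))
    (sub_nonneg.2 ha₁) ha₀ (sub_add_cancel 1 a)
  simp only [smul_eq_mul, Function.comp_apply, log_Gamma_add_one hx] at h
  rw [show (1 - a) * x + a * (x + 1) = x + a by ring] at h
  rw [logGammaRatio]
  linarith

lemma mul_log_sub_log_le_logGammaRatio (ha₀ : 0 ≤ a) (ha₁ : a ≤ 1) (hx : 0 < x) :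
    (1 - a) * (log x - log (x + a)) ≤ logGammaRatio a x := by
  have hxa : 0 < x + a := by linarith
  have h := convexOn_log_Gamma.2 (mem_Ioi.2 hxa) (mem_Ioi.2 (by linarith : 0 < x + a + 1))
    ha₀ (sub_nonneg.2 ha₁) (add_sub_cancel a 1)
  simp only [smul_eq_mul, Function.comp_apply, log_Gamma_add_one hxa] at h
  rw [show a * (x + a) + (1 - a) * (x + a + 1) = x + 1 by ring, log_Gamma_add_one hx] at h
  rw [logGammaRatio]
  nlinarith

lemma logGammaRatio_add_one (ha : 0 ≤ a) (hx : 0 < x) :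
    logGammaRatio (a + 1) x = logGammaRatio a x + (log (x + a) - log x) := by
  rw [logGammaRatio, logGammaRatio, ← add_assoc, log_Gamma_add_one (by linarith)]
  ring

lemma tendsto_logGammaRatio_of_le_one (ha₀ : 0 ≤ a) (ha₁ : a ≤ 1) :
    Tendsto (logGammaRatio a) atTop (𝓝 0) := by
  have h_lower : Tendsto (fun x => (1 - a) * (log x - log (x + a))) atTop (𝓝 0) := by
    simpa using ((tendsto_log_comp_add_sub_log a).neg.const_mul (1 - a))
  refine tendsto_of_tendsto_of_tendsto_of_le_of_le' h_lower tendsto_const_nhds ?_ ?_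
  all_goals filter_upwards [eventually_gt_atTop 0] with x hx
  · exact mul_log_sub_log_le_logGammaRatio ha₀ ha₁ hx
  · exact logGammaRatio_nonpos ha₀ ha₁ hx

theorem tendsto_logGammaRatio (ha : 0 ≤ a) : Tendsto (logGammaRatio a) atTop (𝓝 0) := by
  obtain ⟨n, hn⟩ : ∃ n : ℕ, a ≤ n + 1 := ⟨⌈a⌉₊, (Nat.le_ceil a).trans (by linarith)⟩
  induction n generalizing a with
  | zero => exact tendsto_logGammaRatio_of_le_one ha (by simpa using hn)
  | succ n ih =>
    rcases le_total a 1 with ha₁ | ha₁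
    · exact tendsto_logGammaRatio_of_le_one ha ha₁
    have h := (ih (sub_nonneg.2 ha₁) (by push_cast at hn; linarith)).add
      (tendsto_log_comp_add_sub_log (a - 1))
    rw [add_zero] at h
    refine h.congr' ?_
    filter_upwards [eventually_gt_atTop 0] with x hx
    rw [← logGammaRatio_add_one (sub_nonneg.2 ha₁) hx, sub_add_cancel]

end logGammaRatio

theorem strictAntiOn_Ioi_of_sub_add_one {f g : ℝ → ℝ} {c : ℝ} (hf : Tendsto f atTop (𝓝 c))
    (hfg : ∀ t > 0, f t - f (t + 1) = g t) (hg : StrictAntiOn g (Ioi 0)) :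
    StrictAntiOn f (Ioi 0) := by
  intro x hx y hy hxy
  set h : ℕ → ℝ := fun n => f (x + n) - f (y + n)
  have h_succ (n : ℕ) : h (n + 1) < h n := by
    have hxn : 0 < x + n := by simp only [mem_Ioi] at hx; positivity
    have hyn : 0 < y + n := by simp only [mem_Ioi] at hy; positivity
    have hg_lt := hg hxn hyn (by linarith)
    have hfx := hfg _ hxn
    have hfy := hfg _ hyn
    simp only [h, Nat.cast_succ, ← add_assoc]
    linarith
  have h_lim : Tendsto h atTop (𝓝 0) := by
    have hshift (z : ℝ) : Tendsto (fun n : ℕ => f (z + n)) atTop (𝓝 c) :=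
      hf.comp (tendsto_atTop_add_const_left _ z tendsto_natCast_atTop_atTop)
    simpa using (hshift x).sub (hshift y)
  have h_one_nonneg := (strictAnti_nat_of_succ_lt h_succ).antitone.le_of_tendsto h_lim 1
  have h_one_lt := h_succ 0
  simp only [h, Nat.cast_zero, add_zero] at h_one_lt
  linarith

noncomputable def logPsiStep (β t : ℝ) : ℝ :=
  β * (log (t + 1) - log t) - (log (t + β + 1 / 2) - log (t + 1 / 2))

lemma hasDerivAt_logPsiStep {β t : ℝ} (hβ : 0 ≤ β) (ht : 0 < t) :
    HasDerivAt (logPsiStep β)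
      (β * ((t + 1)⁻¹ - t⁻¹) - ((t + β + 1 / 2)⁻¹ - (t + 1 / 2)⁻¹)) t := by
  have hlog {c : ℝ} (hc : 0 < t + c) : HasDerivAt (fun s => log (s + c)) (t + c)⁻¹ t := by
    simpa using ((hasDerivAt_id t).add_const c).log hc.ne'
  have h := ((hlog (c := 1) (by linarith)).fun_sub (hasDerivAt_log ht.ne')).const_mul β |>.fun_sub
    ((hlog (c := β + 1 / 2) (by linarith)).fun_sub (hlog (c := 1 / 2) (by linarith)))
  simp only [← add_assoc] at h
  exact h

lemma strictAntiOn_logPsiStep {β : ℝ} (hβ : 0 < β) : StrictAntiOn (logPsiStep β) (Ioi 0) := by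
  refine strictAntiOn_of_deriv_neg (convex_Ioi 0)
    (fun t ht => (hasDerivAt_logPsiStep hβ.le ht).continuousAt.continuousWithinAt) ?_
  intro t ht
  rw [interior_Ioi] at ht
  have ht : 0 < t := ht
  rw [(hasDerivAt_logPsiStep hβ.le ht).deriv]
  have h_eq : β * ((t + 1)⁻¹ - t⁻¹) - ((t + β + 1 / 2)⁻¹ - (t + 1 / 2)⁻¹)
      = β * (((t + 1 / 2) * (t + β + 1 / 2))⁻¹ - (t * (t + 1))⁻¹) := by
    field_simp
    ring
  rw [h_eq]
  refine mul_neg_of_pos_of_neg hβ (sub_neg.2 (inv_strictAnti₀ (by positivity) ?_))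
  nlinarith

noncomputable def logPsi (β x : ℝ) : ℝ :=
  log (Gamma (x + β + 1 / 2)) - log (Gamma (x + 1 / 2)) - β * log x

section logPsi

variable {β x : ℝ}

lemma Psi_eq_exp_logPsi (hβ : 0 ≤ β) (hx : 0 < x) : Psi β x = exp (logPsi β x) := by
  rw [logPsi, exp_sub, exp_sub, exp_log (Gamma_pos_of_pos (by linarith)),
    exp_log (Gamma_pos_of_pos (by linarith)), mul_comm, ← rpow_def_of_pos hx, Psi, div_div,
    mul_comm]

lemma logPsi_sub_logPsi_add_one (hβ : 0 ≤ β) (hx : 0 < x) :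
    logPsi β x - logPsi β (x + 1) = logPsiStep β x := by
  have h_shift : x + 1 + β + 1 / 2 = x + β + 1 / 2 + 1 := by ring
  have h_shift' : x + 1 + 1 / 2 = x + 1 / 2 + 1 := by ring
  rw [logPsi, logPsi, logPsiStep, h_shift, h_shift', log_Gamma_add_one (by linarith),
    log_Gamma_add_one (by linarith)]
  ring

lemma logPsi_eq_logGammaRatio_add (β x : ℝ) :
    logPsi β x = logGammaRatio β (x + 1 / 2) + β * (log (x + 1 / 2) - log x) := by
  rw [logPsi, logGammaRatio, add_right_comm]
  ring

lemma tendsto_logPsi (hβ : 0 ≤ β) : Tendsto (logPsi β) atTop (𝓝 0) := by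
  have h := ((tendsto_logGammaRatio hβ).comp
    (tendsto_atTop_add_const_right _ (1 / 2) tendsto_id)).add
    ((tendsto_log_comp_add_sub_log (1 / 2)).const_mul β)
  rw [zero_add, mul_zero] at h
  exact h.congr fun x => (logPsi_eq_logGammaRatio_add β x).symm

lemma strictAntiOn_logPsi (hβ : 0 < β) : StrictAntiOn (logPsi β) (Ioi 0) :=
  strictAntiOn_Ioi_of_sub_add_one (tendsto_logPsi hβ.le)
    (fun _ ht => logPsi_sub_logPsi_add_one hβ.le ht) (strictAntiOn_logPsiStep hβ)

end logPsi

/-- **Monotonicity of the special function `Ψ_β`** (Lemma 2.4): for every `β > 0`,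
`x ↦ Ψ_β(x)` is strictly decreasing on `(0, ∞)` and `Ψ_β(x) → 1` as `x → ∞`. -/
theorem psi_strictAntiOn_and_tendsto_one (β : ℝ) (hβ : 0 < β) :
    StrictAntiOn (fun x => Psi β x) (Set.Ioi 0)
    ∧ Tendsto (fun x => Psi β x) atTop (nhds 1) := by
  have h_exp : EqOn (exp ∘ logPsi β) (fun x => Psi β x) (Ioi 0) :=
    fun x hx => (Psi_eq_exp_logPsi hβ.le hx).symm
  constructor
  · exact (exp_strictMono.comp_strictAntiOn (strictAntiOn_logPsi hβ)).congr h_exp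
  · have h := (continuous_exp.tendsto 0).comp (tendsto_logPsi hβ.le)
    rw [exp_zero] at h
    exact h.congr' (eventuallyEq_of_mem (Ioi_mem_atTop 0) h_exp)
end

section
/- For β > 0 define R_β(x) = (1 + 1/x)^β · (x + 1/2)/(x + β + 1/2) for x > 0. Then for every β > 0, the function x ↦ R_β(x) is strictly decreasing on (0, ∞). -/
open Real

/-
With `c = β + 1/2`, the product rule gives
`R_β'(x) = β (1 + 1/x)^(β-1) (x(x + 1) - (x + 1/2)(x + c)) / (x² (x + c)²)`,
and the bracket collapses to `-(β x + β/2 + 1/4)`, which is negative for `x, β > 0`.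
-/

lemma hasDerivAt_one_add_one_div_rpow (β : ℝ) {x : ℝ} (hx : 0 < x) :
    HasDerivAt (fun x : ℝ => (1 + 1 / x) ^ β) (-β * (1 + 1 / x) ^ (β - 1) / x ^ 2) x := by
  have hbase : HasDerivAt (fun x : ℝ => 1 + 1 / x) (-(x ^ 2)⁻¹) x := by
    simpa using (hasDerivAt_inv hx.ne').const_add 1
  refine (hbase.rpow_const (p := β) (Or.inl (by positivity))).congr_deriv ?_
  ring

lemma hasDerivAt_add_div_add (a b : ℝ) {x : ℝ} (hx : x + b ≠ 0) :
    HasDerivAt (fun x : ℝ => (x + a) / (x + b)) ((b - a) / (x + b) ^ 2) x := by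
  refine (((hasDerivAt_id x).add_const a).fun_div ((hasDerivAt_id x).add_const b) hx).congr_deriv ?_
  simp only [id]
  ring

lemma hasDerivAt_one_add_one_div_rpow_mul {β x : ℝ} (hx : 0 < x) (hxβ : x + β + 1 / 2 ≠ 0) :
    HasDerivAt (fun x : ℝ => (1 + 1 / x) ^ β * ((x + 1 / 2) / (x + β + 1 / 2)))
      (-(β * (β * x + β / 2 + 1 / 4) * (1 + 1 / x) ^ (β - 1)) /
        (x ^ 2 * (x + β + 1 / 2) ^ 2)) x := by
  have hquot := hasDerivAt_add_div_add (1 / 2) (β + 1 / 2) (by rwa [← add_assoc])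
  simp only [← add_assoc] at hquot
  refine ((hasDerivAt_one_add_one_div_rpow β hx).fun_mul hquot).congr_deriv ?_
  rw [rpow_sub_one (by positivity)]
  field_simp
  ring

/-- **The ratio function `R_β` is strictly decreasing** (claim in Lemma 2.4): for every
`β > 0`, the function `R_β(x) = (1 + 1/x)^β (x + 1/2)/(x + β + 1/2)` is strictly
decreasing on `(0, ∞)`. -/
theorem R_strictAntiOn (β : ℝ) (hβ : 0 < β) :
    StrictAntiOn
      (fun x : ℝ => (1 + 1 / x) ^ β * ((x + 1 / 2) / (x + β + 1 / 2)))
      (Set.Ioi 0) := by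
  have hderiv : ∀ x ∈ Set.Ioi (0 : ℝ), HasDerivAt
      (fun x : ℝ => (1 + 1 / x) ^ β * ((x + 1 / 2) / (x + β + 1 / 2)))
      (-(β * (β * x + β / 2 + 1 / 4) * (1 + 1 / x) ^ (β - 1)) /
        (x ^ 2 * (x + β + 1 / 2) ^ 2)) x :=
    fun x (hx : 0 < x) => hasDerivAt_one_add_one_div_rpow_mul hx (by positivity)
  apply strictAntiOn_of_deriv_neg (convex_Ioi 0)
    (fun x hx => (hderiv x hx).continuousAt.continuousWithinAt)
  rw [interior_Ioi]
  intro x (hx : 0 < x)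
  rw [(hderiv x hx).deriv, neg_div, neg_lt_zero]
  positivity
end

section
/- For β > 0 define Ψ_β(x) = Γ(x + β + 1/2)/(x^β · Γ(x + 1/2)) and R_β(x) = (1 + 1/x)^β · (x + 1/2)/(x + β + 1/2) for x > 0. Then for every β > 0 and x > 0, the infinite product Π_{k=0}^∞ R_β(x + k) converges and equals Ψ_β(x). -/
/-!
`Γ(y + 1) = y Γ(y)` gives `R_β(y) Ψ_β(y + 1) = Ψ_β(y)`, so the partial products telescope:
`∏_{k<N} R_β(x + k) = Ψ_β(x) / Ψ_β(x + N)`. It remains to see `Ψ_β(x + N) → 1`, which is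
Wendel's limit `Γ(n + a) / (n ^ (a - b) Γ(n + b)) → 1`, obtained by dividing Euler's limit
formulas for `Γ(a)` and `Γ(b)`.
-/

open Filter Real

/-- The ratio function `R_β(x) = (1 + 1/x)^β (x + 1/2)/(x + β + 1/2)`. -/
noncomputable def Rfun (β x : ℝ) : ℝ :=
  (1 + 1 / x) ^ β * ((x + 1 / 2) / (x + β + 1 / 2))

namespace Real

theorem Gamma_add_nat_eq_mul_prod {s : ℝ} (hs : 0 < s) (n : ℕ) :
    Gamma (s + n) = Gamma s * ∏ j ∈ Finset.range n, (s + j) := by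
  induction n with
  | zero => simp
  | succ n ih =>
    rw [Finset.prod_range_succ, ← mul_assoc, ← ih, Nat.cast_succ, ← add_assoc,
      Gamma_add_one (by positivity), mul_comm]

theorem GammaSeq_eq_div_Gamma {s : ℝ} (hs : 0 < s) (n : ℕ) :
    GammaSeq s n = (n : ℝ) ^ s * n.factorial * Gamma s / Gamma (s + (n + 1)) := by
  have hΓ := Gamma_add_nat_eq_mul_prod hs (n + 1)
  push_cast at hΓ
  rw [GammaSeq, hΓ, mul_comm (Gamma s), mul_div_mul_right _ _ (Gamma_pos_of_pos hs).ne']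

theorem tendsto_Gamma_add_nat_div_rpow_mul_Gamma {a b : ℝ} (ha : 0 < a) (hb : 0 < b) :
    Tendsto (fun n : ℕ => Gamma (a + (n + 1)) / ((n : ℝ) ^ (a - b) * Gamma (b + (n + 1))))
      atTop (nhds 1) := by
  have hΓa := (Gamma_pos_of_pos ha).ne'
  have hΓb := (Gamma_pos_of_pos hb).ne'
  have hlim : Tendsto (fun n : ℕ => Gamma a / Gamma b * (GammaSeq b n / GammaSeq a n)) atTop
      (nhds (Gamma a / Gamma b * (Gamma b / Gamma a))) :=
    tendsto_const_nhds.mul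
      ((GammaSeq_tendsto_Gamma b).div (GammaSeq_tendsto_Gamma a) hΓa)
  rw [div_mul_div_cancel₀ hΓb, div_self hΓa] at hlim
  refine hlim.congr' ?_
  filter_upwards [eventually_gt_atTop 0] with n hn
  have hn : (0 : ℝ) < n := Nat.cast_pos.mpr hn
  have hpow : (n : ℝ) ^ a = (n : ℝ) ^ (a - b) * (n : ℝ) ^ b := by
    rw [← rpow_add hn, sub_add_cancel]
  rw [GammaSeq_eq_div_Gamma ha, GammaSeq_eq_div_Gamma hb, hpow]
  field_simp

end Real

theorem Rfun_mul_Psi_add_one {β y : ℝ} (hβ : 0 ≤ β) (hy : 0 < y) :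
    Rfun β y * Psi β (y + 1) = Psi β y := by
  have hβy : 0 < y + β + 1 / 2 := by positivity
  have hy' : 0 < y + 1 / 2 := by positivity
  rw [Rfun, Psi, Psi, show y + 1 + β + 1 / 2 = y + β + 1 / 2 + 1 by ring,
    show y + 1 + 1 / 2 = y + 1 / 2 + 1 by ring, Gamma_add_one hβy.ne', Gamma_add_one hy'.ne',
    one_add_div hy.ne', div_rpow (by positivity) hy.le]
  field_simp

theorem prod_Rfun_mul_Psi {β x : ℝ} (hβ : 0 ≤ β) (hx : 0 < x) (N : ℕ) :
    (∏ k ∈ Finset.range N, Rfun β (x + k)) * Psi β (x + N) = Psi β x := by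
  induction N with
  | zero => simp
  | succ N ih =>
    rw [Finset.prod_range_succ, mul_assoc, Nat.cast_succ, ← add_assoc,
      Rfun_mul_Psi_add_one hβ (by positivity), ih]

theorem Psi_pos {β x : ℝ} (hβ : 0 ≤ β) (hx : 0 < x) : 0 < Psi β x :=
  div_pos (Gamma_pos_of_pos (by positivity))
    (mul_pos (rpow_pos_of_pos hx β) (Gamma_pos_of_pos (by positivity)))

theorem tendsto_Psi_add_nat {β x : ℝ} (hβ : 0 ≤ β) (hx : 0 < x) :
    Tendsto (fun n : ℕ => Psi β (x + n)) atTop (nhds 1) := by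
  rw [← tendsto_add_atTop_iff_nat 1]
  have hW := tendsto_Gamma_add_nat_div_rpow_mul_Gamma (a := x + β + 1 / 2) (b := x + 1 / 2)
    (by positivity) (by positivity)
  have hratio : Tendsto (fun n : ℕ => ((n : ℝ) / (n + (x + 1))) ^ β) atTop (nhds 1) := by
    simpa using (tendsto_natCast_div_add_atTop (x + 1)).rpow_const (Or.inl one_ne_zero)
  have hprod := hW.mul hratio
  rw [one_mul] at hprod
  refine hprod.congr' ?_
  filter_upwards [eventually_gt_atTop 0] with n hn
  have hn : (0 : ℝ) < n := Nat.cast_pos.mpr hn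
  rw [Psi, div_rpow hn.le (by positivity), show x + β + 1 / 2 - (x + 1 / 2) = β by ring,
    show (n : ℝ) + (x + 1) = x + (n + 1) by ring, Nat.cast_succ,
    show x + (n + 1) + β + 1 / 2 = x + β + 1 / 2 + (n + 1) by ring,
    show x + (n + 1) + 1 / 2 = x + 1 / 2 + (n + 1) by ring]
  field_simp

/-- **Infinite-product representation of `Ψ_β`** (step in the proof of Lemma 2.4):
for every `β > 0` and `x > 0`, the infinite product `∏_{k=0}^∞ R_β(x + k)` converges
and equals `Ψ_β(x)`. -/
theorem psi_eq_infinite_product (β x : ℝ) (hβ : 0 < β) (hx : 0 < x) :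
    Tendsto (fun N => ∏ k ∈ Finset.range N, Rfun β (x + k)) atTop (nhds (Psi β x)) := by
  have hlim := (tendsto_const_nhds (x := Psi β x)).div (tendsto_Psi_add_nat hβ.le hx) one_ne_zero
  rw [div_one] at hlim
  refine hlim.congr fun N => ?_
  rw [Pi.div_apply, ← prod_Rfun_mul_Psi hβ.le hx N,
    mul_div_cancel_right₀ _ (Psi_pos hβ.le (by positivity)).ne']
end

section
/- Let k be a nonnegative integer and k < p < k+1. Define Q_k(t) = (−1)^{k+1}·(e^{−t} − Σ_{j=0}^k (−1)^j t^j / j!) for t > 0. Then: (i) Q_k(t) > 0 for all t > 0; (ii) the integral C_p = ∫_0^∞ Q_k(t)·t^{−p−1} dt converges (to a finite positive number); and (iii) for every x > 0, x^p = C_p^{−1} · ∫_0^∞ Q_k(t·x)·t^{−p−1} dt. -/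
/-!
Since `Q_k + Q_{k+1} = t^{k+1}/(k+1)!` and `Q_{k+1}(0) = 0`, induction gives `Q_{k+1}' = Q_k`, so
`Q_k > 0` on `(0, ∞)` by monotonicity. Positivity in the same identity yields
`Q_k(t) < t^{k+1}/(k+1)!` (integrable against `t^{-p-1}` near `0` as `p < k+1`) and
`Q_k(t) < t^k/k!` (integrable near `∞` as `k < p`). The representation of `x^p` is the substitution
`t ↦ t x` in the integral defining `C_p`.
-/

open MeasureTheory Real

/-- `Q_k(t) = (-1)^{k+1} (e^{-t} - ∑_{j=0}^k (-1)^j t^j / j!)`. -/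
noncomputable def Q (k : ℕ) (t : ℝ) : ℝ :=
  (-1) ^ (k + 1) *
    (Real.exp (-t) - ∑ j ∈ Finset.range (k + 1), (-1) ^ j * t ^ j / (Nat.factorial j))

open Set

section Scaling

variable {E : Type*} [NormedAddCommGroup E] [NormedSpace ℝ E]

theorem integral_Ioi_comp_mul_right_mul_rpow (f : ℝ → E) (s : ℝ) {x : ℝ} (hx : 0 < x) :
    ∫ t in Ioi (0 : ℝ), t ^ s • f (t * x) = x ^ (-s - 1) • ∫ t in Ioi (0 : ℝ), t ^ s • f t := by
  have hscale : ∀ t ∈ Ioi (0 : ℝ), t ^ s • f (t * x) = x ^ (-s) • ((t * x) ^ s • f (t * x)) := by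
    intro t ht
    rw [mul_rpow (mem_Ioi.mp ht).le hx.le, smul_smul, ← mul_assoc, mul_comm (x ^ (-s)), mul_assoc,
      ← rpow_add hx, neg_add_cancel, rpow_zero, mul_one]
  rw [setIntegral_congr_fun measurableSet_Ioi hscale, integral_smul,
    integral_comp_mul_right_Ioi (fun t => t ^ s • f t) 0 hx, zero_mul, smul_smul,
    ← rpow_neg_one x, ← rpow_add hx, ← sub_eq_add_neg]

end Scaling

theorem continuous_Q (k : ℕ) : Continuous (Q k) := by
  unfold Q
  fun_prop

theorem Q_zero_eq_one_sub_exp (t : ℝ) : Q 0 t = 1 - exp (-t) := by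
  simp [Q]

theorem Q_add_Q_succ (k : ℕ) (t : ℝ) :
    Q k t + Q (k + 1) t = t ^ (k + 1) / (k + 1).factorial := by
  have hsign : ((-1 : ℝ) ^ (k + 1)) * ((-1 : ℝ) ^ (k + 1)) = 1 := by
    rw [← pow_add]; exact Even.neg_one_pow ⟨k + 1, rfl⟩
  unfold Q
  rw [Finset.sum_range_succ (n := k + 1), pow_succ (n := k + 1)]
  linear_combination (t ^ (k + 1) / ((k + 1).factorial : ℝ)) * hsign

theorem Q_apply_zero (k : ℕ) : Q k 0 = 0 := by
  induction k with
  | zero => simp [Q_zero_eq_one_sub_exp]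
  | succ k ih => simpa [ih] using Q_add_Q_succ k 0

theorem Q_succ_eq_pow_div_factorial_sub (k : ℕ) :
    Q (k + 1) = fun t => t ^ (k + 1) / (k + 1).factorial - Q k t := by
  ext t
  linarith [Q_add_Q_succ k t]

theorem hasDerivAt_pow_succ_div_factorial (k : ℕ) (t : ℝ) :
    HasDerivAt (fun t : ℝ => t ^ (k + 1) / (k + 1).factorial) (t ^ k / k.factorial) t := by
  refine ((hasDerivAt_pow (k + 1) t).div_const _).congr_deriv ?_
  rw [Nat.factorial_succ, Nat.cast_mul, Nat.add_sub_cancel]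
  field_simp

theorem hasDerivAt_Q_succ (k : ℕ) (t : ℝ) : HasDerivAt (Q (k + 1)) (Q k t) t := by
  induction k generalizing t with
  | zero =>
    simp only [Q_succ_eq_pow_div_factorial_sub, Q_zero_eq_one_sub_exp]
    refine ((hasDerivAt_pow_succ_div_factorial 0 t).fun_sub
      ((hasDerivAt_neg t).exp.const_sub 1)).congr_deriv ?_
    simp
  | succ k ih =>
    rw [Q_succ_eq_pow_div_factorial_sub (k + 1)]
    refine ((hasDerivAt_pow_succ_div_factorial (k + 1) t).fun_sub (ih t)).congr_deriv ?_
    linarith [Q_add_Q_succ k t]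

theorem Q_pos (k : ℕ) {t : ℝ} (ht : 0 < t) : 0 < Q k t := by
  induction k generalizing t with
  | zero =>
    rw [Q_zero_eq_one_sub_exp, sub_pos]
    exact exp_lt_one_iff.mpr (neg_lt_zero.mpr ht)
  | succ k ih =>
    have hmono : StrictMonoOn (Q (k + 1)) (Ici 0) := by
      refine strictMonoOn_of_deriv_pos (convex_Ici 0) (continuous_Q _).continuousOn ?_
      intro s hs
      rw [interior_Ici] at hs
      rw [(hasDerivAt_Q_succ k s).deriv]
      exact ih hs
    simpa [Q_apply_zero] using hmono self_mem_Ici ht.le ht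

theorem Q_lt_pow_succ_div_factorial (k : ℕ) {t : ℝ} (ht : 0 < t) :
    Q k t < t ^ (k + 1) / (k + 1).factorial := by
  linarith [Q_add_Q_succ k t, Q_pos (k + 1) ht]

theorem Q_lt_pow_div_factorial (k : ℕ) {t : ℝ} (ht : 0 < t) : Q k t < t ^ k / k.factorial := by
  cases k with
  | zero => simpa [Q_zero_eq_one_sub_exp] using exp_pos (-t)
  | succ k => linarith [Q_add_Q_succ k t, Q_pos k ht]

section Integrability

variable {k : ℕ} {p : ℝ}

theorem integrableOn_Q_mul_rpow_of_le (n : ℕ) {s : Set ℝ} (hs : MeasurableSet s)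
    (hs_pos : s ⊆ Ioi 0) (hQ : ∀ t ∈ s, Q k t ≤ t ^ n / n.factorial)
    (hpow : IntegrableOn (fun t : ℝ => t ^ ((n : ℝ) - p - 1)) s) :
    IntegrableOn (fun t => Q k t * t ^ (-p - 1)) s := by
  refine (hpow.div_const (n.factorial : ℝ)).mono'
    ((continuous_Q k).measurable.mul (measurable_id.pow_const _)).aestronglyMeasurable ?_
  rw [ae_restrict_iff' hs]
  filter_upwards with t ht
  have ht0 : 0 < t := hs_pos ht
  have hrpow : 0 < t ^ (-p - 1) := rpow_pos_of_pos ht0 _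
  rw [norm_of_nonneg (mul_pos (Q_pos k ht0) hrpow).le]
  calc Q k t * t ^ (-p - 1) ≤ t ^ n / n.factorial * t ^ (-p - 1) := by gcongr; exact hQ t ht
    _ = t ^ ((n : ℝ) - p - 1) / n.factorial := by
      rw [div_mul_eq_mul_div, ← rpow_natCast, ← rpow_add ht0]
      ring_nf

theorem integrableOn_Q_mul_rpow (hk : (k : ℝ) < p) (hk' : p < k + 1) :
    IntegrableOn (fun t => Q k t * t ^ (-p - 1)) (Ioi 0) := by
  have hnear_zero : IntegrableOn (fun t => Q k t * t ^ (-p - 1)) (Ioc 0 1) := by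
    refine integrableOn_Q_mul_rpow_of_le (k + 1) measurableSet_Ioc Ioc_subset_Ioi_self
      (fun t ht => (Q_lt_pow_succ_div_factorial k ht.1).le) ?_
    have hpow := intervalIntegral.intervalIntegrable_rpow' (a := 0) (b := 1)
      (r := ((k + 1 : ℕ) : ℝ) - p - 1) (by push_cast; linarith)
    rwa [intervalIntegrable_iff, uIoc_of_le zero_le_one] at hpow
  have hnear_top : IntegrableOn (fun t => Q k t * t ^ (-p - 1)) (Ioi 1) :=
    integrableOn_Q_mul_rpow_of_le k measurableSet_Ioi (Ioi_subset_Ioi zero_le_one)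
      (fun t ht => (Q_lt_pow_div_factorial k (zero_lt_one.trans ht)).le)
      (integrableOn_Ioi_rpow_of_lt (by linarith) zero_lt_one)
  rw [← Ioc_union_Ioi_eq_Ioi zero_le_one]
  exact hnear_zero.union hnear_top

theorem integral_Q_mul_rpow_pos (hk : (k : ℝ) < p) (hk' : p < k + 1) :
    0 < ∫ t in Ioi (0 : ℝ), Q k t * t ^ (-p - 1) := by
  have hpos : ∀ t ∈ Ioi (0 : ℝ), 0 < Q k t * t ^ (-p - 1) := fun t ht =>
    mul_pos (Q_pos k ht) (rpow_pos_of_pos ht _)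
  have hnonneg : 0 ≤ᵐ[volume.restrict (Ioi 0)] fun t => Q k t * t ^ (-p - 1) :=
    (ae_restrict_iff' measurableSet_Ioi).mpr (ae_of_all _ fun t ht => (hpos t ht).le)
  have hsupp : (Function.support fun t => Q k t * t ^ (-p - 1)) ∩ Ioi 0 = Ioi 0 :=
    inter_eq_right.mpr fun t ht => (hpos t ht).ne'
  rw [setIntegral_pos_iff_support_of_nonneg_ae hnonneg (integrableOn_Q_mul_rpow hk hk'), hsupp]
  simp

end Integrability

/-- **Integral representation of power functions** (Lemma 3.1): for `k < p < k+1`,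
`Q_k > 0` on `(0,∞)`, the integral `C_p = ∫₀^∞ Q_k(t) t^{-p-1} dt` converges to a positive
number, and `x^p = C_p⁻¹ ∫₀^∞ Q_k(tx) t^{-p-1} dt` for all `x > 0`. -/
theorem Qk_integral_representation (k : ℕ) (p : ℝ)
    (hk : (k : ℝ) < p) (hk' : p < k + 1) :
    (∀ t : ℝ, 0 < t → 0 < Q k t)
    ∧ IntegrableOn (fun t => Q k t * t ^ (-p - 1)) (Set.Ioi (0 : ℝ))
    ∧ 0 < ∫ t in Set.Ioi (0 : ℝ), Q k t * t ^ (-p - 1)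
    ∧ ∀ x : ℝ, 0 < x →
        x ^ p = (∫ t in Set.Ioi (0 : ℝ), Q k t * t ^ (-p - 1))⁻¹
          * ∫ t in Set.Ioi (0 : ℝ), Q k (t * x) * t ^ (-p - 1) := by
  have hC := integral_Q_mul_rpow_pos hk hk'
  refine ⟨fun t => Q_pos k, integrableOn_Q_mul_rpow hk hk', hC, fun x hx => ?_⟩
  have hscale := integral_Ioi_comp_mul_right_mul_rpow (Q k) (-p - 1) hx
  simp only [smul_eq_mul, neg_sub, sub_neg_eq_add, add_sub_cancel_left] at hscale
  simp only [mul_comm _ (_ ^ (-p - 1))] at hC ⊢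
  rw [hscale]
  field_simp
end

section
/- Let p > 4 and define f(x) = ((1 − x²)^{(p+1)/2} − x^{p+1}) / (√(1 − x²) − x) for 0 ≤ x < 1/√2, extended continuously at x = 1/√2. Then f'(0) = 1, f'(1/√2) = 0, and f''(1/√2) = (1/3)·2^{1−p/2}·p(p+1)(p−4) > 0; consequently f is not monotone on (0, 1/√2): it attains a local maximum at some interior point of (0, 1/√2). Here f(x) = Γ(p+1)^{−1}·E[(x·𝓔 + √(1−x²)·𝓔')^p] for 𝓔, 𝓔' i.i.d. standard exponential. -/
/-!
On `[0, 1/√2)` the function `f` is the divided difference of `y ↦ y ^ (p + 1)` between `x` and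
`√(1 - x²)`, that is `(p + 1) ∫₀¹ m_s(x) ^ p ds` with `m_s(x) = (1 - s) x + s √(1 - x²)`. This
integral is smooth on `(-1, 1)`, in particular across the removable singularity `x = 1/√2`, where
`m_s ≡ 1/√2`; so the derivatives of `f` are obtained by differentiating under the integral sign.
As `f'(0) = 1`, `f'(1/√2) = 0` and `f''(1/√2) > 0`, the derivative `f'` is positive near `0` and
negative just left of `1/√2`. Hence `f` is neither monotone nor antitone, and its maximum on the
interval between two such points is interior.

For the probabilistic formula, the shear `(x, y) ↦ (x + y, y)` turns `E[(a𝓔 + b𝓔')^p]` into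
`∫₀^∞ e^{-t} ∫₀^t (a (t - y) + b y)^p dy dt`, and the substitution `y = t s` makes this
`Γ(p + 2) ∫₀¹ ((1 - s) a + s b)^p ds`.
-/

open MeasureTheory ProbabilityTheory Real Set Filter Topology
open scoped ENNReal Interval

theorem hasDerivAt_intervalIntegral_of_continuousOn {E : Type*} [NormedAddCommGroup E]
    [NormedSpace ℝ E] {F F' : ℝ → ℝ → E} {U : Set ℝ} {a b x₀ : ℝ} (hU : IsOpen U)
    (hx₀ : x₀ ∈ U) (hF : ∀ x ∈ U, ContinuousOn (F x) [[a, b]])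
    (hF' : ContinuousOn (Function.uncurry F') (U ×ˢ [[a, b]]))
    (hFF' : ∀ x ∈ U, ∀ t ∈ [[a, b]], HasDerivAt (F · t) (F' x t) x) :
    HasDerivAt (fun x => ∫ t in a..b, F x t) (∫ t in a..b, F' x₀ t) x₀ := by
  obtain ⟨K, hKc, hx₀K, hKU⟩ := exists_compact_subset hU hx₀
  have hK : K ∈ 𝓝 x₀ := mem_interior_iff_mem_nhds.mp hx₀K
  obtain ⟨C, hC⟩ := (hKc.prod isCompact_uIcc).exists_bound_of_continuousOn
    (hF'.mono (prod_mono hKU le_rfl))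
  refine (intervalIntegral.hasDerivAt_integral_of_dominated_loc_of_deriv_le
    (bound := fun _ => C) hK ?_ (hF x₀ hx₀).intervalIntegrable ?_ ?_ intervalIntegrable_const
    ?_).2
  · filter_upwards [hK] with x hx
    exact ((hF x (hKU hx)).mono uIoc_subset_uIcc).aestronglyMeasurable measurableSet_uIoc
  · refine ContinuousOn.aestronglyMeasurable ?_ measurableSet_uIoc
    exact hF'.comp (continuousOn_const.prodMk continuousOn_id)
      fun t ht => ⟨hx₀, uIoc_subset_uIcc ht⟩
  · exact ae_of_all _ fun t ht x hx => hC (x, t) ⟨hx, uIoc_subset_uIcc ht⟩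
  · exact ae_of_all _ fun t ht x hx => hFF' x (hKU hx) t (uIoc_subset_uIcc ht)

theorem exists_isLocalMax_of_hasDerivWithinAt_pos_of_neg {g : ℝ → ℝ} {a b ga gb : ℝ}
    (hab : a < b) (hg : ContinuousOn g (Icc a b)) (ha : HasDerivWithinAt g ga (Icc a b) a)
    (hga : 0 < ga) (hb : HasDerivWithinAt g gb (Icc a b) b) (hgb : gb < 0) :
    ∃ x ∈ Ioo a b, IsLocalMax g x := by
  obtain ⟨ξ, hξ, hmax⟩ := isCompact_Icc.exists_isMaxOn (nonempty_Icc.2 hab.le) hg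
  have hξa : ξ ≠ a := by
    rintro rfl
    have := hmax.localize.hasFDerivWithinAt_nonpos ha
      (sub_mem_posTangentConeAt_of_segment_subset (segment_eq_Icc hab.le).subset)
    simp only [ContinuousLinearMap.toSpanSingleton_apply, smul_eq_mul] at this
    nlinarith
  have hξb : ξ ≠ b := by
    rintro rfl
    have := hmax.localize.hasFDerivWithinAt_nonpos hb
      (sub_mem_posTangentConeAt_of_segment_subset (by rw [segment_symm, segment_eq_Icc hab.le]))
    simp only [ContinuousLinearMap.toSpanSingleton_apply, smul_eq_mul] at this
    nlinarith
  have hξ' : ξ ∈ Ioo a b := ⟨hξ.1.lt_of_ne' hξa, hξ.2.lt_of_ne hξb⟩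
  exact ⟨ξ, hξ', hmax.isLocalMax (Icc_mem_nhds hξ'.1 hξ'.2)⟩

theorem sub_mul_integral_rpow_segment {q : ℝ} (hq : 0 ≤ q) (a b : ℝ) :
    (b - a) * ((q + 1) * ∫ s in (0 : ℝ)..1, ((1 - s) * a + s * b) ^ q) =
      b ^ (q + 1) - a ^ (q + 1) := by
  have hderiv : ∀ s ∈ [[(0 : ℝ), 1]], HasDerivAt (fun s => ((1 - s) * a + s * b) ^ (q + 1))
      ((b - a) * ((q + 1) * ((1 - s) * a + s * b) ^ q)) s := by
    intro s _
    have h : HasDerivAt (fun s => (1 - s) * a + s * b) (b - a) s :=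
      ((((hasDerivAt_id' s).const_sub 1).mul_const a).add
        ((hasDerivAt_id' s).mul_const b)).congr_deriv (by ring)
    refine (h.rpow_const (p := q + 1) (Or.inr (by linarith))).congr_deriv ?_
    rw [add_sub_cancel_right]
    ring
  rw [← intervalIntegral.integral_const_mul, ← intervalIntegral.integral_const_mul,
    intervalIntegral.integral_eq_sub_of_hasDerivAt hderiv]
  · simp
  · apply Continuous.intervalIntegrable
    fun_prop (disch := exact fun _ => Or.inr hq)

theorem integral_rpow_segment_nonneg {a b : ℝ} (ha : 0 ≤ a) (hb : 0 ≤ b) (q : ℝ) :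
    0 ≤ ∫ s in (0 : ℝ)..1, ((1 - s) * a + s * b) ^ q :=
  intervalIntegral.integral_nonneg zero_le_one fun s hs =>
    rpow_nonneg (by nlinarith [hs.1, hs.2]) _

theorem integral_rpow_sub_mul_add_mul {a b q t : ℝ} (ha : 0 ≤ a) (hb : 0 ≤ b) (hq : 0 ≤ q)
    (ht : 0 ≤ t) :
    ∫ y in (0 : ℝ)..t, (a * (t - y) + b * y) ^ q =
      t ^ (q + 1) * ∫ s in (0 : ℝ)..1, ((1 - s) * a + s * b) ^ q := by
  have hsub := intervalIntegral.smul_integral_comp_mul_left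
    (fun y => (a * (t - y) + b * y) ^ q) t (a := 0) (b := 1)
  rw [mul_zero, mul_one] at hsub
  rw [← hsub, smul_eq_mul, rpow_add_one' ht (by linarith), mul_comm (t ^ q), mul_assoc,
    ← intervalIntegral.integral_const_mul (t ^ q)]
  congr 1
  refine intervalIntegral.integral_congr fun s hs => ?_
  rw [uIcc_of_le zero_le_one] at hs
  rw [← mul_rpow ht (by nlinarith [hs.1, hs.2])]
  ring_nf

theorem integral_zero_one_quadratic (A B C : ℝ) :
    ∫ s in (0 : ℝ)..1, (A + B * s + C * s ^ 2) = A + B / 2 + C / 3 := by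
  rw [intervalIntegral.integral_add, intervalIntegral.integral_add,
    intervalIntegral.integral_const_mul, intervalIntegral.integral_const_mul]
  · norm_num
    ring
  all_goals exact Continuous.intervalIntegrable (by fun_prop) _ _

theorem ae_nonneg_expMeasure (r : ℝ) : ∀ᵐ x ∂expMeasure r, 0 ≤ x := by
  simp only [ae_iff, not_le]
  exact (withDensity_apply _ measurableSet_Iio).trans (lintegral_exponentialPDF_of_nonpos le_rfl)

theorem lintegral_prod_expMeasure_one {g : ℝ × ℝ → ℝ≥0∞} (hg : Measurable g) :
    ∫⁻ z, g z ∂(expMeasure 1).prod (expMeasure 1) =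
      ∫⁻ t, ENNReal.ofReal (exp (-t)) * ∫⁻ y in Icc 0 t, g (t - y, y) := by
  let H : ℝ × ℝ → ℝ≥0∞ := {z | z.2 ∈ Icc 0 z.1}.indicator
    fun z => ENNReal.ofReal (exp (-z.1)) * g (z.1 - z.2, z.2)
  have hH : Measurable H := by
    refine Measurable.indicator (by fun_prop) ?_
    exact (measurableSet_le measurable_const measurable_snd).inter
      (measurableSet_le measurable_snd measurable_fst)
  have hpdf : Measurable (exponentialPDF 1) := (measurable_exponentialPDFReal 1).ennreal_ofReal
  have hshear : ∀ z : ℝ × ℝ,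
      exponentialPDF 1 z.1 * exponentialPDF 1 z.2 * g z = H (z.1 + z.2, z.2) := by
    rintro ⟨x, y⟩
    simp only [H, indicator, mem_ofPred_eq, mem_Icc, add_sub_cancel_right, exponentialPDF_eq,
      le_add_iff_nonneg_left, one_mul]
    split_ifs <;> simp_all [← ENNReal.ofReal_mul (exp_pos _).le, ← exp_add, add_comm]
  change ∫⁻ z, g z ∂(volume.withDensity (exponentialPDF 1)).prod
    (volume.withDensity (exponentialPDF 1)) = _
  rw [prod_withDensity hpdf hpdf, lintegral_withDensity_eq_lintegral_mul _ (by fun_prop) hg]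
  simp_rw [Pi.mul_apply, hshear]
  rw [(measurePreserving_add_prod volume volume).lintegral_comp hH,
    lintegral_prod _ hH.aemeasurable]
  congr with t
  rw [← lintegral_const_mul _ (by fun_prop), ← lintegral_indicator measurableSet_Icc]
  rfl

theorem lintegral_rpow_prod_expMeasure_one {a b q : ℝ} (ha : 0 ≤ a) (hb : 0 ≤ b)
    (hq : 0 ≤ q) :
    ∫⁻ z, ENNReal.ofReal ((a * z.1 + b * z.2) ^ q) ∂(expMeasure 1).prod (expMeasure 1) =
      ENNReal.ofReal (Gamma (q + 2) * ∫ s in (0 : ℝ)..1, ((1 - s) * a + s * b) ^ q) := by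
  set K := ∫ s in (0 : ℝ)..1, ((1 - s) * a + s * b) ^ q
  have hinner (t : ℝ) (ht : 0 ≤ t) : ∫⁻ y in Icc 0 t, ENNReal.ofReal ((a * (t - y) + b * y) ^ q) =
      ENNReal.ofReal (t ^ (q + 1) * K) := by
    rw [← integral_rpow_sub_mul_add_mul ha hb hq ht, intervalIntegral.integral_of_le ht,
      ← integral_Icc_eq_integral_Ioc, ofReal_integral_eq_lintegral_ofReal]
    · exact (Continuous.continuousOn
        (by fun_prop (disch := exact fun _ => Or.inr hq))).integrableOn_Icc
    · filter_upwards [ae_restrict_mem measurableSet_Icc] with y hy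
      exact rpow_nonneg (by nlinarith [hy.1, hy.2]) _
  have hpoint (t : ℝ) : ENNReal.ofReal (exp (-t)) *
      ∫⁻ y in Icc 0 t, ENNReal.ofReal ((a * (t - y) + b * y) ^ q) =
      (Ici 0).indicator (fun t => ENNReal.ofReal (exp (-t) * t ^ (q + 2 - 1) * K)) t := by
    rcases le_or_gt 0 t with ht | ht
    · rw [hinner t ht, indicator_of_mem (mem_Ici.mpr ht), ← ENNReal.ofReal_mul (exp_pos _).le]
      ring_nf
    · simp [Icc_eq_empty_of_lt ht, indicator_of_notMem (notMem_Ici.mpr ht)]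
  rw [lintegral_prod_expMeasure_one (by fun_prop (disch := exact fun _ => Or.inr hq))]
  simp_rw [hpoint]
  rw [lintegral_indicator measurableSet_Ici, ← ofReal_integral_eq_lintegral_ofReal,
    integral_Ici_eq_integral_Ioi, integral_mul_const, Gamma_eq_integral (by linarith)]
  · exact (integrableOn_Ici_iff_integrableOn_Ioi).2
      ((GammaIntegral_convergent (by linarith)).mul_const K)
  · filter_upwards [ae_restrict_mem measurableSet_Ici] with t ht
    exact mul_nonneg (mul_nonneg (exp_pos _).le (rpow_nonneg ht _))
      (integral_rpow_segment_nonneg ha hb q)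

theorem integral_rpow_of_indepFun_expMeasure {Ω : Type*} [MeasurableSpace Ω] {μ : Measure Ω}
    {E E' : Ω → ℝ} (hE : Measurable E) (hE' : Measurable E')
    (hlawE : μ.map E = expMeasure 1) (hlawE' : μ.map E' = expMeasure 1) (hEE' : IndepFun E E' μ)
    {a b q : ℝ} (ha : 0 ≤ a) (hb : 0 ≤ b) (hq : 0 ≤ q) :
    ∫ ω, (a * E ω + b * E' ω) ^ q ∂μ =
      Gamma (q + 2) * ∫ s in (0 : ℝ)..1, ((1 - s) * a + s * b) ^ q := by
  have hmap : μ.map (fun ω => (E ω, E' ω)) = (expMeasure 1).prod (expMeasure 1) := by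
    have : IsProbabilityMeasure (expMeasure 1) := isProbabilityMeasure_expMeasure one_pos
    rw [(indepFun_iff_map_prod_eq_prod_map_map' hE.aemeasurable hE'.aemeasurable
      (hlawE ▸ inferInstance) (hlawE' ▸ inferInstance)).mp hEE', hlawE, hlawE']
  have hnonneg : 0 ≤ᵐ[μ] fun ω => (a * E ω + b * E' ω) ^ q := by
    filter_upwards [ae_of_ae_map hE.aemeasurable (hlawE ▸ ae_nonneg_expMeasure 1),
      ae_of_ae_map hE'.aemeasurable (hlawE' ▸ ae_nonneg_expMeasure 1)] with ω h h'
    exact rpow_nonneg (by positivity) _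
  rw [integral_eq_lintegral_of_nonneg_ae hnonneg
      (by fun_prop (disch := exact fun _ => Or.inr hq)),
    ← lintegral_map (f := fun z => ENNReal.ofReal ((a * z.1 + b * z.2) ^ q))
      (by fun_prop (disch := exact fun _ => Or.inr hq)) (hE.prodMk hE'),
    hmap, lintegral_rpow_prod_expMeasure_one ha hb hq, ENNReal.toReal_ofReal
      (mul_nonneg (Gamma_pos_of_pos (by linarith)).le (integral_rpow_segment_nonneg ha hb q))]

noncomputable def chord (x s : ℝ) : ℝ := (1 - s) * x + s * √(1 - x ^ 2)

noncomputable def chordDeriv (x s : ℝ) : ℝ := 1 - s - s * x / √(1 - x ^ 2)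

noncomputable def chordIntegral (p x : ℝ) : ℝ := (p + 1) * ∫ s in (0 : ℝ)..1, chord x s ^ p

noncomputable def chordIntegralDeriv (p x : ℝ) : ℝ :=
  (p + 1) * ∫ s in (0 : ℝ)..1, p * chord x s ^ (p - 1) * chordDeriv x s

noncomputable def chordIntegralDeriv2 (p x : ℝ) : ℝ :=
  (p + 1) * ∫ s in (0 : ℝ)..1, p * ((p - 1) * chord x s ^ (p - 2) * chordDeriv x s ^ 2 -
    chord x s ^ (p - 1) * s / √(1 - x ^ 2) ^ 3)

section Derivatives

variable {p x : ℝ}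

theorem sqrt_one_sub_sq_pos (hx : x ∈ Ioo (-1) 1) : 0 < √(1 - x ^ 2) :=
  sqrt_pos.mpr (by nlinarith [hx.1, hx.2])

theorem hasDerivAt_sqrt_one_sub_sq (hx : x ∈ Ioo (-1) 1) :
    HasDerivAt (fun x => √(1 - x ^ 2)) (-x / √(1 - x ^ 2)) x := by
  refine (((hasDerivAt_pow 2 x).const_sub 1).sqrt ?_).congr_deriv ?_
  · exact (by nlinarith [hx.1, hx.2] : (0 : ℝ) < 1 - x ^ 2).ne'
  · field_simp
    norm_num

theorem hasDerivAt_chord (s : ℝ) (hx : x ∈ Ioo (-1) 1) :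
    HasDerivAt (chord · s) (chordDeriv x s) x := by
  refine (((hasDerivAt_id' x).const_mul (1 - s)).add
    ((hasDerivAt_sqrt_one_sub_sq hx).const_mul s)).congr_deriv ?_
  rw [chordDeriv]
  ring

theorem hasDerivAt_chordDeriv (s : ℝ) (hx : x ∈ Ioo (-1) 1) :
    HasDerivAt (chordDeriv · s) (-(s / √(1 - x ^ 2) ^ 3)) x := by
  have hb := (sqrt_one_sub_sq_pos hx).ne'
  have hb2 : √(1 - x ^ 2) ^ 2 = 1 - x ^ 2 := sq_sqrt (by nlinarith [hx.1, hx.2])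
  refine (((hasDerivAt_id' x).const_mul s).div (hasDerivAt_sqrt_one_sub_sq hx) hb).const_sub
    (1 - s) |>.congr_deriv ?_
  field_simp
  linear_combination (-s) * hb2

theorem continuous_chord : Continuous (Function.uncurry chord) := by
  unfold Function.uncurry chord
  fun_prop

theorem continuousOn_chordDeriv :
    ContinuousOn (Function.uncurry chordDeriv) (Ioo (-1) 1 ×ˢ [[0, 1]]) := by
  unfold Function.uncurry chordDeriv
  exact ContinuousOn.sub (by fun_prop) (ContinuousOn.div (by fun_prop) (by fun_prop)
    fun z hz => (sqrt_one_sub_sq_pos hz.1).ne')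

theorem hasDerivAt_chordIntegral (hp : 1 ≤ p) (hx : x ∈ Ioo (-1) 1) :
    HasDerivAt (chordIntegral p) (chordIntegralDeriv p x) x := by
  unfold chordIntegral chordIntegralDeriv
  refine (hasDerivAt_intervalIntegral_of_continuousOn (F := fun x s => chord x s ^ p)
    (F' := fun x s => p * chord x s ^ (p - 1) * chordDeriv x s)
    isOpen_Ioo hx (fun x _ => ?_) ?_ fun x hx s _ => ?_).const_mul (p + 1)
  · exact (continuous_chord.comp (Continuous.prodMk_right x)).continuousOn.rpow_const
      fun _ _ => Or.inr (by linarith)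
  · exact ((continuous_chord.continuousOn.rpow_const fun _ _ => Or.inr (by linarith)).const_mul
      p).mul continuousOn_chordDeriv
  · refine ((hasDerivAt_chord s hx).rpow_const (Or.inr hp)).congr_deriv ?_
    ring

theorem hasDerivAt_chordIntegralDeriv (hp : 2 ≤ p) (hx : x ∈ Ioo (-1) 1) :
    HasDerivAt (chordIntegralDeriv p) (chordIntegralDeriv2 p x) x := by
  unfold chordIntegralDeriv chordIntegralDeriv2
  have hchord (r : ℝ) (hr : 0 ≤ r) : Continuous fun z : ℝ × ℝ => chord z.1 z.2 ^ r :=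
    continuous_chord.rpow_const fun _ => Or.inr hr
  refine (hasDerivAt_intervalIntegral_of_continuousOn
    (F := fun x s => p * chord x s ^ (p - 1) * chordDeriv x s)
    (F' := fun x s => p * ((p - 1) * chord x s ^ (p - 2) * chordDeriv x s ^ 2 -
      chord x s ^ (p - 1) * s / √(1 - x ^ 2) ^ 3))
    isOpen_Ioo hx (fun x hx => ?_) ?_ fun x hx s _ => ?_).const_mul (p + 1)
  · exact (((hchord (p - 1) (by linarith)).comp (Continuous.prodMk_right x)).const_mul
      p).continuousOn.mul (continuousOn_chordDeriv.comp (Continuous.prodMk_right x).continuousOn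
        fun s hs => ⟨hx, hs⟩)
  · refine ContinuousOn.const_mul (ContinuousOn.sub ?_ ?_) p
    · exact (((hchord (p - 2) (by linarith)).continuousOn).const_mul (p - 1)).mul
        (continuousOn_chordDeriv.pow 2)
    · exact ContinuousOn.div ((hchord (p - 1) (by linarith)).mul continuous_snd).continuousOn
        (by fun_prop) fun z hz => pow_ne_zero 3 (sqrt_one_sub_sq_pos hz.1).ne'
  · refine ((((hasDerivAt_chord s hx).rpow_const (Or.inr (by linarith))).const_mul p).mul
      (hasDerivAt_chordDeriv s hx)).congr_deriv ?_
    rw [show p - 1 - 1 = p - 2 by ring]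
    ring

end Derivatives

theorem sqrt_two_inv_pos : 0 < (√2)⁻¹ := by positivity

theorem sqrt_two_inv_sq : (√2)⁻¹ ^ 2 = 1 / 2 := by
  rw [inv_pow, sq_sqrt zero_le_two, one_div]

theorem Icc_zero_sqrt_two_inv_subset : Icc 0 (√2)⁻¹ ⊆ Ioo (-1 : ℝ) 1 :=
  fun _ hx => ⟨by linarith [hx.1], hx.2.trans_lt (by nlinarith [sqrt_two_inv_sq, hx.1])⟩

theorem sqrt_one_sub_sq_sqrt_two_inv : √(1 - (√2)⁻¹ ^ 2) = (√2)⁻¹ := by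
  rw [sqrt_two_inv_sq, show (1 : ℝ) - 1 / 2 = 2⁻¹ by norm_num, sqrt_inv]

theorem sqrt_two_inv_rpow_sub_two (p : ℝ) : (√2)⁻¹ ^ (p - 2) = 2 ^ (1 - p / 2) := by
  rw [sqrt_eq_rpow, ← rpow_neg zero_le_two, ← rpow_mul zero_le_two]
  ring_nf

theorem lt_sqrt_one_sub_sq {x : ℝ} (hx : 0 ≤ x) (hxc : x < (√2)⁻¹) : x < √(1 - x ^ 2) := by
  rw [lt_sqrt hx]
  nlinarith [sqrt_two_inv_sq]

theorem chordIntegral_eq {p x : ℝ} (hp : 0 ≤ p) (hx : 0 ≤ x) (hxc : x < (√2)⁻¹) :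
    chordIntegral p x = ((1 - x ^ 2) ^ ((p + 1) / 2) - x ^ (p + 1)) / (√(1 - x ^ 2) - x) := by
  have hx2 : 0 ≤ 1 - x ^ 2 := by nlinarith [sqrt_two_inv_sq]
  rw [eq_div_iff (sub_pos.mpr (lt_sqrt_one_sub_sq hx hxc)).ne', mul_comm, chordIntegral]
  unfold chord
  rw [sub_mul_integral_rpow_segment hp, sqrt_eq_rpow, ← rpow_mul hx2]
  ring_nf

theorem chord_sqrt_two_inv (s : ℝ) : chord (√2)⁻¹ s = (√2)⁻¹ := by
  rw [chord, sqrt_one_sub_sq_sqrt_two_inv]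
  ring

theorem chordDeriv_sqrt_two_inv (s : ℝ) : chordDeriv (√2)⁻¹ s = 1 - 2 * s := by
  rw [chordDeriv, sqrt_one_sub_sq_sqrt_two_inv, mul_div_assoc, div_self sqrt_two_inv_pos.ne']
  ring

theorem chordIntegralDeriv_zero {p : ℝ} (hp : 1 ≤ p) : chordIntegralDeriv p 0 = 1 := by
  have hint : ∀ s ∈ [[(0 : ℝ), 1]],
      p * chord 0 s ^ (p - 1) * chordDeriv 0 s = p * s ^ (p - 1) - p * s ^ (p - 1 + 1) := by
    intro s hs
    rw [uIcc_of_le zero_le_one] at hs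
    rw [rpow_add_one' hs.1 (by linarith), chord, chordDeriv]
    norm_num
    ring
  have hcont (r : ℝ) (hr : 0 ≤ r) : IntervalIntegrable (fun s : ℝ => p * s ^ r) volume 0 1 :=
    Continuous.intervalIntegrable (by fun_prop (disch := exact fun _ => Or.inr hr)) _ _
  rw [chordIntegralDeriv, intervalIntegral.integral_congr hint, intervalIntegral.integral_sub
    (hcont _ (by linarith)) (hcont _ (by linarith)), intervalIntegral.integral_const_mul,
    intervalIntegral.integral_const_mul, integral_rpow (Or.inl (by linarith)),
    integral_rpow (Or.inl (by linarith)), sub_add_cancel, zero_rpow (by linarith),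
    zero_rpow (by linarith), one_rpow, one_rpow]
  field_simp
  ring

theorem chordIntegralDeriv_sqrt_two_inv (p : ℝ) : chordIntegralDeriv p (√2)⁻¹ = 0 := by
  have hint (s : ℝ) : p * chord (√2)⁻¹ s ^ (p - 1) * chordDeriv (√2)⁻¹ s =
      p * (√2)⁻¹ ^ (p - 1) * (1 + -2 * s + 0 * s ^ 2) := by
    rw [chord_sqrt_two_inv, chordDeriv_sqrt_two_inv]
    ring
  simp_rw [chordIntegralDeriv, hint, intervalIntegral.integral_const_mul,
    integral_zero_one_quadratic]
  ring

theorem chordIntegralDeriv2_sqrt_two_inv (p : ℝ) :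
    chordIntegralDeriv2 p (√2)⁻¹ = 1 / 3 * 2 ^ (1 - p / 2) * (p * (p + 1) * (p - 4)) := by
  have hc : (√2)⁻¹ ^ (p - 1) = (√2)⁻¹ ^ (p - 2) * (√2)⁻¹ := by
    rw [← rpow_add_one sqrt_two_inv_pos.ne']
    ring_nf
  have hc3 : (√2)⁻¹ / (√2)⁻¹ ^ 3 = 2 := by
    rw [pow_succ, sqrt_two_inv_sq]
    field_simp [sqrt_two_inv_pos.ne']
  have hint (s : ℝ) : p * ((p - 1) * chord (√2)⁻¹ s ^ (p - 2) * chordDeriv (√2)⁻¹ s ^ 2 -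
      chord (√2)⁻¹ s ^ (p - 1) * s / √(1 - (√2)⁻¹ ^ 2) ^ 3) =
      p * (√2)⁻¹ ^ (p - 2) * ((p - 1) + (2 - 4 * p) * s + 4 * (p - 1) * s ^ 2) := by
    rw [chord_sqrt_two_inv, chordDeriv_sqrt_two_inv, sqrt_one_sub_sq_sqrt_two_inv, hc,
      show (√2)⁻¹ ^ (p - 2) * (√2)⁻¹ * s / (√2)⁻¹ ^ 3 =
        (√2)⁻¹ ^ (p - 2) * s * ((√2)⁻¹ / (√2)⁻¹ ^ 3) by ring, hc3]
    ring
  simp_rw [chordIntegralDeriv2, hint, intervalIntegral.integral_const_mul,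
    integral_zero_one_quadratic, sqrt_two_inv_rpow_sub_two]
  ring

theorem eqOn_chordIntegral {p : ℝ} (hp : 1 ≤ p) {f : ℝ → ℝ}
    (hf : ∀ x : ℝ, 0 ≤ x → x < (√2)⁻¹ →
      f x = ((1 - x ^ 2) ^ ((p + 1) / 2) - x ^ (p + 1)) / (√(1 - x ^ 2) - x))
    (hcont : ContinuousOn f (Icc 0 (√2)⁻¹)) : EqOn f (chordIntegral p) (Icc 0 (√2)⁻¹) := by
  refine EqOn.of_subset_closure (s := Ico 0 (√2)⁻¹)
    (fun x hx => (hf x hx.1 hx.2).trans (chordIntegral_eq (by linarith) hx.1 hx.2).symm) hcont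
    (fun x hx => ?_) Ico_subset_Icc_self (closure_Ico sqrt_two_inv_pos.ne).superset
  exact (hasDerivAt_chordIntegral hp (Icc_zero_sqrt_two_inv_subset hx)).continuousAt
    |>.continuousWithinAt

section EqOnChordIntegral

variable {p : ℝ} {f : ℝ → ℝ}

theorem derivWithin_eq_chordIntegralDeriv (hp : 1 ≤ p)
    (hfΦ : EqOn f (chordIntegral p) (Icc 0 (√2)⁻¹)) :
    EqOn (derivWithin f (Icc 0 (√2)⁻¹)) (chordIntegralDeriv p) (Icc 0 (√2)⁻¹) := fun x hx => by
  rw [derivWithin_congr hfΦ (hfΦ hx)]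
  exact (hasDerivAt_chordIntegral hp (Icc_zero_sqrt_two_inv_subset hx)).hasDerivWithinAt
    |>.derivWithin (uniqueDiffOn_Icc sqrt_two_inv_pos x hx)

theorem hasDerivAt_of_eqOn_chordIntegral (hp : 1 ≤ p)
    (hfΦ : EqOn f (chordIntegral p) (Icc 0 (√2)⁻¹)) {y : ℝ} (hy : y ∈ Ioo 0 (√2)⁻¹) :
    HasDerivAt f (chordIntegralDeriv p y) y :=
  (hasDerivAt_chordIntegral hp (Icc_zero_sqrt_two_inv_subset (Ioo_subset_Icc_self hy)))
    |>.congr_of_eventuallyEq (eventually_of_mem (Icc_mem_nhds hy.1 hy.2) hfΦ)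

end EqOnChordIntegral

theorem chordIntegral_eq_integral {Ω : Type*} [MeasurableSpace Ω] {μ : Measure Ω}
    {E E' : Ω → ℝ} (hE : Measurable E) (hE' : Measurable E')
    (hlawE : μ.map E = expMeasure 1) (hlawE' : μ.map E' = expMeasure 1) (hEE' : IndepFun E E' μ)
    {p x : ℝ} (hp : 0 ≤ p) (hx : 0 ≤ x) :
    chordIntegral p x = (Gamma (p + 1))⁻¹ * ∫ ω, (x * E ω + √(1 - x ^ 2) * E' ω) ^ p ∂μ := by
  have hΓ : Gamma (p + 2) = Gamma (p + 1) * (p + 1) := by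
    rw [show p + 2 = p + 1 + 1 by ring, Gamma_add_one (by linarith), mul_comm]
  rw [integral_rpow_of_indepFun_expMeasure hE hE' hlawE hlawE' hEE' hx (sqrt_nonneg _) hp, hΓ,
    mul_assoc, inv_mul_cancel_left₀ (Gamma_pos_of_pos (by linarith)).ne']
  rfl

theorem exists_chordIntegralDeriv_pos_neg {p : ℝ} (hp : 4 < p) :
    ∃ y₁ ∈ Ioo 0 (√2)⁻¹, ∃ y₂ ∈ Ioo 0 (√2)⁻¹, y₁ < y₂ ∧
      0 < chordIntegralDeriv p y₁ ∧ chordIntegralDeriv p y₂ < 0 := by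
  have hc := sqrt_two_inv_pos
  have hp4 : 0 < p - 4 := by linarith
  have hd2 := hasDerivAt_chordIntegralDeriv (p := p) (by linarith)
    (Icc_zero_sqrt_two_inv_subset ⟨hc.le, le_rfl⟩)
  rw [chordIntegralDeriv2_sqrt_two_inv, hasDerivAt_iff_tendsto_slope] at hd2
  have hslope : ∀ᶠ y in 𝓝[<] (√2)⁻¹, 0 < slope (chordIntegralDeriv p) (√2)⁻¹ y :=
    (hd2.mono_left (nhdsWithin_mono _ fun y hy => ne_of_lt hy)).eventually
      (eventually_gt_nhds (by positivity))
  obtain ⟨y₂, hy₂, hy₂c, hy₂0⟩ := (hslope.and (eventually_mem_nhdsWithin.and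
    (nhdsWithin_le_nhds (Ioi_mem_nhds hc)))).exists
  have hd1 := (hasDerivAt_chordIntegralDeriv (p := p) (by linarith)
    (Icc_zero_sqrt_two_inv_subset ⟨le_rfl, hc.le⟩)).continuousAt
  rw [ContinuousAt, chordIntegralDeriv_zero (by linarith)] at hd1
  have hpos : ∀ᶠ y in 𝓝[>] (0 : ℝ), 0 < chordIntegralDeriv p y :=
    nhdsWithin_le_nhds (hd1.eventually (eventually_gt_nhds one_pos))
  obtain ⟨y₁, hy₁, hy₁0, hy₁₂⟩ := (hpos.and (eventually_mem_nhdsWithin.and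
    (nhdsWithin_le_nhds (Iio_mem_nhds hy₂0)))).exists
  exact ⟨y₁, ⟨hy₁0, hy₁₂.trans hy₂c⟩, y₂, ⟨hy₂0, hy₂c⟩, hy₁₂, hy₁,
    neg_of_slope_pos hy₂c hy₂ (chordIntegralDeriv_sqrt_two_inv p)⟩

theorem failure_of_monotonicity_general
    {Ω : Type*} [MeasurableSpace Ω] (μ : Measure Ω)
    (E E' : Ω → ℝ) (hE : Measurable E) (hE' : Measurable E')
    (hlawE : Measure.map E μ = expMeasure 1) (hlawE' : Measure.map E' μ = expMeasure 1)
    (hEE' : IndepFun E E' μ)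
    (p : ℝ) (hp : 4 < p) (f : ℝ → ℝ)
    (hf : ∀ x : ℝ, 0 ≤ x → x < (Real.sqrt 2)⁻¹ →
      f x = ((1 - x ^ 2) ^ ((p + 1) / 2) - x ^ (p + 1)) / (Real.sqrt (1 - x ^ 2) - x))
    (hcont : ContinuousOn f (Icc 0 (Real.sqrt 2)⁻¹)) :
    derivWithin f (Icc 0 (Real.sqrt 2)⁻¹) 0 = 1
    ∧ derivWithin f (Icc 0 (Real.sqrt 2)⁻¹) (Real.sqrt 2)⁻¹ = 0
    ∧ derivWithin (fun y => derivWithin f (Icc 0 (Real.sqrt 2)⁻¹) y)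
        (Icc 0 (Real.sqrt 2)⁻¹) (Real.sqrt 2)⁻¹
        = (1 / 3) * 2 ^ (1 - p / 2) * (p * (p + 1) * (p - 4))
    ∧ 0 < (1 / 3) * (2 : ℝ) ^ (1 - p / 2) * (p * (p + 1) * (p - 4))
    ∧ ¬ MonotoneOn f (Ioo 0 (Real.sqrt 2)⁻¹)
    ∧ ¬ AntitoneOn f (Ioo 0 (Real.sqrt 2)⁻¹)
    ∧ (∃ x ∈ Ioo (0 : ℝ) (Real.sqrt 2)⁻¹, IsLocalMax f x)
    ∧ ∀ x : ℝ, 0 ≤ x → x ≤ (Real.sqrt 2)⁻¹ →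
        f x = (Real.Gamma (p + 1))⁻¹
          * ∫ ω, (x * E ω + Real.sqrt (1 - x ^ 2) * E' ω) ^ p ∂μ := by
  have hc := sqrt_two_inv_pos
  have hfΦ := eqOn_chordIntegral (by linarith) hf hcont
  have hf' := derivWithin_eq_chordIntegralDeriv (by linarith) hfΦ
  have hf'' (y) (hy : y ∈ Ioo 0 (√2)⁻¹) := hasDerivAt_of_eqOn_chordIntegral (by linarith) hfΦ hy
  obtain ⟨y₁, hy₁, y₂, hy₂, hy₁₂, hpos, hneg⟩ := exists_chordIntegralDeriv_pos_neg hp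
  refine ⟨?_, ?_, ?_, ?_, fun hmono => ?_, fun hanti => ?_, ?_, fun x hx hxc => ?_⟩
  · rw [hf' ⟨le_rfl, hc.le⟩, chordIntegralDeriv_zero (by linarith)]
  · rw [hf' ⟨hc.le, le_rfl⟩, chordIntegralDeriv_sqrt_two_inv]
  · rw [derivWithin_congr hf' (hf' ⟨hc.le, le_rfl⟩), ← chordIntegralDeriv2_sqrt_two_inv]
    exact (hasDerivAt_chordIntegralDeriv (by linarith) (Icc_zero_sqrt_two_inv_subset
      ⟨hc.le, le_rfl⟩)).hasDerivWithinAt.derivWithin (uniqueDiffOn_Icc hc _ ⟨hc.le, le_rfl⟩)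
  · have : 0 < p - 4 := by linarith
    positivity
  · have := hmono.derivWithin_nonneg (x := y₂)
    rw [derivWithin_of_isOpen isOpen_Ioo hy₂, (hf'' y₂ hy₂).deriv] at this
    linarith
  · have := hanti.derivWithin_nonpos (x := y₁)
    rw [derivWithin_of_isOpen isOpen_Ioo hy₁, (hf'' y₁ hy₁).deriv] at this
    linarith
  · obtain ⟨x, hx, hmax⟩ := exists_isLocalMax_of_hasDerivWithinAt_pos_of_neg hy₁₂
      (hcont.mono (Icc_subset_Icc hy₁.1.le hy₂.2.le)) (hf'' y₁ hy₁).hasDerivWithinAt hpos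
      (hf'' y₂ hy₂).hasDerivWithinAt hneg
    exact ⟨x, ⟨hy₁.1.trans hx.1, hx.2.trans hy₂.2⟩, hmax⟩
  · rw [hfΦ ⟨hx, hxc⟩, chordIntegral_eq_integral hE hE' hlawE hlawE' hEE' (by linarith) hx]

/-- **Failure of monotonicity for `p > 4`** (Lemma 3.4): let `p > 4` and let
`f(x) = ((1 - x²)^{(p+1)/2} - x^{p+1})/(√(1 - x²) - x)` on `[0, 1/√2)`, extended
continuously at `x = 1/√2`. Then `f'(0) = 1`, `f'(1/√2) = 0`,
`f''(1/√2) = (1/3)·2^{1 - p/2}·p(p+1)(p-4) > 0`; consequently `f` is not monotone on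
`(0, 1/√2)` and attains a local maximum at an interior point. Moreover
`f(x) = Γ(p+1)⁻¹ E[(x𝓔 + √(1-x²)𝓔')^p]` for i.i.d. standard exponentials `𝓔, 𝓔'`. -/
theorem failure_of_monotonicity
    {Ω : Type*} [MeasurableSpace Ω] (μ : Measure Ω) [IsProbabilityMeasure μ]
    (E E' : Ω → ℝ) (hE : Measurable E) (hE' : Measurable E')
    (hlawE : Measure.map E μ = expMeasure 1) (hlawE' : Measure.map E' μ = expMeasure 1)
    (hEE' : IndepFun E E' μ)
    (p : ℝ) (hp : 4 < p) (f : ℝ → ℝ)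
    (hf : ∀ x : ℝ, 0 ≤ x → x < (Real.sqrt 2)⁻¹ →
      f x = ((1 - x ^ 2) ^ ((p + 1) / 2) - x ^ (p + 1)) / (Real.sqrt (1 - x ^ 2) - x))
    (hcont : ContinuousOn f (Icc 0 (Real.sqrt 2)⁻¹)) :
    derivWithin f (Icc 0 (Real.sqrt 2)⁻¹) 0 = 1
    ∧ derivWithin f (Icc 0 (Real.sqrt 2)⁻¹) (Real.sqrt 2)⁻¹ = 0
    ∧ derivWithin (fun y => derivWithin f (Icc 0 (Real.sqrt 2)⁻¹) y)
        (Icc 0 (Real.sqrt 2)⁻¹) (Real.sqrt 2)⁻¹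
        = (1 / 3) * 2 ^ (1 - p / 2) * (p * (p + 1) * (p - 4))
    ∧ 0 < (1 / 3) * (2 : ℝ) ^ (1 - p / 2) * (p * (p + 1) * (p - 4))
    ∧ ¬ MonotoneOn f (Ioo 0 (Real.sqrt 2)⁻¹)
    ∧ ¬ AntitoneOn f (Ioo 0 (Real.sqrt 2)⁻¹)
    ∧ (∃ x ∈ Ioo (0 : ℝ) (Real.sqrt 2)⁻¹, IsLocalMax f x)
    ∧ ∀ x : ℝ, 0 ≤ x → x ≤ (Real.sqrt 2)⁻¹ →
        f x = (Real.Gamma (p + 1))⁻¹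
          * ∫ ω, (x * E ω + Real.sqrt (1 - x ^ 2) * E' ω) ^ p ∂μ :=
  failure_of_monotonicity_general μ E E' hE hE' hlawE hlawE' hEE' p hp f hf hcont
end
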